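/- arXiv:1401.6651 — 7 statements merged into one kernel-verified Lean document; each statement's English description precedes it below -/
import Mathlib

section
/- Let n ≥ 1 and let B ∈ ℝ^{n×n} be a matrix whose characteristic polynomial splits over ℝ and all of whose eigenvalues are nonzero (equivalently, B has only real eigenvalues and is nonsingular). Then there exist an integer L ≥ 1 and nonzero real numbers u(0), u(1), …, u(L) such that (I + u(L)B)(I + u(L−1)B)⋯(I + u(1)B)(I + u(0)B) = I if and only if every root of the minimal polynomial of B has multiplicity at most two in the minimal polynomial (equivalently, the dimension of the largest Jordan block in the Jordan canonical form of B is no greater than two). -/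
open Matrix MeasureTheory Polynomial

/-- The product `(I + u(l-1)B) ⋯ (I + u(1)B)(I + u(0)B)`. -/
noncomputable def prodCtrl {n : ℕ} (B : Matrix (Fin n) (Fin n) ℝ) (l : ℕ) (u : ℕ → ℝ) :
    Matrix (Fin n) (Fin n) ℝ :=
  ((List.range l).reverse.map fun k => (1 : Matrix (Fin n) (Fin n) ℝ) + u k • B).prod

/-- `ξ` can be steered to `η` in the system `x(k+1) = (I + u(k)B) x(k)`. -/
noncomputable def steers {n : ℕ} (B : Matrix (Fin n) (Fin n) ℝ) (ξ η : Fin n → ℝ) : Prop :=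
  ∃ l : ℕ, 1 ≤ l ∧ ∃ u : ℕ → ℝ, (prodCtrl B l u).mulVec ξ = η

/-- Near-controllability: outside two Lebesgue-null sets, any state can be steered to any state. -/
noncomputable def nearlyControllable {n : ℕ} (B : Matrix (Fin n) (Fin n) ℝ) : Prop :=
  ∃ E F : Set (Fin n → ℝ), volume E = 0 ∧ volume F = 0 ∧
    ∀ ξ ∉ E, ∀ η ∉ F, steers B ξ η

/-- The matrix `[ξ, Bξ, B²ξ, …, B^{n-1}ξ]`. -/
noncomputable def ctrlMat {n : ℕ} (B : Matrix (Fin n) (Fin n) ℝ) (ξ : Fin n → ℝ) :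
    Matrix (Fin n) (Fin n) ℝ :=
  Matrix.of fun i j => (B ^ (j : ℕ)).mulVec ξ i

/-- The `N × N` Jordan block with eigenvalue `lam`. -/
def jordanBlock (N : ℕ) (lam : ℝ) : Matrix (Fin N) (Fin N) ℝ :=
  Matrix.of fun i j => if i = j then lam else if (j : ℕ) = (i : ℕ) + 1 then 1 else 0

/-- Block-diagonal Jordan matrix: `r` two-dimensional Jordan blocks with eigenvalues
`lam 0, …, lam (r-1)` followed by `1 × 1` blocks `lam r, …, lam (m-1)` (so `n = m + r`). -/
def pairJordan (n r : ℕ) (lam : ℕ → ℝ) : Matrix (Fin n) (Fin n) ℝ :=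
  Matrix.of fun i j =>
    if (i : ℕ) = (j : ℕ) then
      (if (i : ℕ) < 2 * r then lam ((i : ℕ) / 2) else lam ((i : ℕ) - r))
    else if (j : ℕ) = (i : ℕ) + 1 ∧ (i : ℕ) < 2 * r ∧ (i : ℕ) % 2 = 0 then 1 else 0

/-!
If `(I + u_L B) ⋯ (I + u_0 B) = I`, the minimal polynomial of `B` divides `∏ (1 + u_k X) - 1`.
At a root `μ` of multiplicity three, the shift `X ↦ X + μ` and a normalisation of the factors
give `∏ (1 + v_k X) ≡ 1 mod X³` with `v_k = u_k / (1 + u_k μ)`; then `∑ v_k = 0` and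
`∑ v_k² = (∑ v_k)² - 2 e₂(v) = 0`, so every `u_k` vanishes.

Conversely, let `s = ∏ (X - λ)` over `0` and the eigenvalues of `B`. If no root of the minimal
polynomial is more than double, it divides `s²`. The roots of `s` are simple, so `s` changes sign
across each of them and `s ± w` still split over `ℝ` for small `w > 0`. Hence
`p = 1 - s² / w² = -(s - w)(s + w) / w²` splits; as `p(0) = 1`, `p = ∏ (1 - X / ρ)` over its
(nonzero) roots, and `u_k = -1 / ρ_k` gives `∏ (I + u_k B) = p(B) = I`.
-/

open Filter Topology

noncomputable def ctrlPoly (l : ℕ) (u : ℕ → ℝ) : ℝ[X] :=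
  ∏ k ∈ Finset.range l, (1 + C (u k) * X)

lemma aeval_ctrlPoly {n : ℕ} (B : Matrix (Fin n) (Fin n) ℝ) (l : ℕ) (u : ℕ → ℝ) :
    aeval B (ctrlPoly l u) = prodCtrl B l u := by
  have : ctrlPoly l u = ((List.range l).reverse.map fun k => 1 + C (u k) * X).prod := by
    rw [List.map_reverse, List.prod_reverse]
    rfl
  rw [this, map_list_prod, List.map_map, prodCtrl]
  congr 1
  refine List.map_congr_left fun k _ => ?_
  simp [Algebra.smul_def]

lemma coeff_prod_one_add_C_mul_X {R ι : Type*} [CommRing R] (S : Finset ι) (v : ι → R) :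
    (∏ k ∈ S, (1 + C (v k) * X)).coeff 0 = 1 ∧
    (∏ k ∈ S, (1 + C (v k) * X)).coeff 1 = ∑ k ∈ S, v k ∧
    (∏ k ∈ S, (1 + C (v k) * X)).coeff 1 ^ 2 - 2 * (∏ k ∈ S, (1 + C (v k) * X)).coeff 2 =
      ∑ k ∈ S, v k ^ 2 := by
  induction S using Finset.cons_induction with
  | empty => simp [coeff_one]
  | cons a S ha ih =>
    obtain ⟨h0, h1, h2⟩ := ih
    set Q := ∏ k ∈ S, (1 + C (v k) * X)
    have coeff_succ (m : ℕ) :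
        ((1 + C (v a) * X) * Q).coeff (m + 1) = Q.coeff (m + 1) + v a * Q.coeff m := by
      rw [add_mul, one_mul, coeff_add, mul_assoc, coeff_C_mul, coeff_X_mul]
    rw [Finset.prod_cons, Finset.sum_cons, Finset.sum_cons, coeff_succ, coeff_succ, mul_coeff_zero]
    refine ⟨by rw [h0]; simp, by rw [h0, h1]; ring, ?_⟩
    rw [h0]
    linear_combination h2

lemma eq_zero_of_X_pow_three_dvd_prod_one_add_C_mul_X_sub_one {ι : Type*} (S : Finset ι)
    (v : ι → ℝ) (h : X ^ 3 ∣ ∏ k ∈ S, (1 + C (v k) * X) - 1) : ∀ k ∈ S, v k = 0 := by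
  obtain ⟨-, h1, h2⟩ := coeff_prod_one_add_C_mul_X S v
  have hcoeff (d : ℕ) (hd : d < 3) (hd0 : d ≠ 0) : (∏ k ∈ S, (1 + C (v k) * X)).coeff d = 0 := by
    simpa [coeff_one, hd0] using (X_pow_dvd_iff.mp h) d hd
  have hsq : ∑ k ∈ S, v k ^ 2 = 0 := by
    rw [← h2, hcoeff 1 (by norm_num) one_ne_zero, hcoeff 2 (by norm_num) two_ne_zero]
    ring
  intro k hk
  exact pow_eq_zero_iff two_ne_zero |>.mp <|
    (Finset.sum_eq_zero_iff_of_nonneg fun k _ => sq_nonneg (v k)).mp hsq k hk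

lemma eq_zero_of_X_pow_three_dvd_prod_affine_sub_one {ι : Type*} (S : Finset ι)
    (a b : ι → ℝ) (h : X ^ 3 ∣ ∏ k ∈ S, (C (a k) + C (b k) * X) - 1) : ∀ k ∈ S, b k = 0 := by
  have hprod : ∏ k ∈ S, a k = 1 := by
    have := X_dvd_iff.mp ((dvd_pow_self X three_ne_zero).trans h)
    simpa [coeff_zero_eq_eval_zero, eval_prod, sub_eq_zero] using this
  have ha : ∀ k ∈ S, a k ≠ 0 := Finset.prod_ne_zero_iff.mp (by simp [hprod])
  have hnormal : ∏ k ∈ S, (C (a k) + C (b k) * X) = ∏ k ∈ S, (1 + C (b k / a k) * X) := calc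
    ∏ k ∈ S, (C (a k) + C (b k) * X) = ∏ k ∈ S, (C (a k) * (1 + C (b k / a k) * X)) :=
      Finset.prod_congr rfl fun k hk => by
        rw [mul_add, mul_one, ← mul_assoc, ← C_mul, mul_div_cancel₀ _ (ha k hk)]
    _ = ∏ k ∈ S, (1 + C (b k / a k) * X) := by
      rw [Finset.prod_mul_distrib, ← map_prod, hprod, C_1, one_mul]
  rw [hnormal] at h
  intro k hk
  simpa [ha k hk] using eq_zero_of_X_pow_three_dvd_prod_one_add_C_mul_X_sub_one S _ h k hk

lemma not_X_sub_C_pow_three_dvd_ctrlPoly_sub_one {l : ℕ} {u : ℕ → ℝ} {k : ℕ} (hk : k < l)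
    (hu : u k ≠ 0) (μ : ℝ) : ¬ (X - C μ) ^ 3 ∣ ctrlPoly l u - 1 := by
  intro h
  have hshift : X ^ 3 ∣ ∏ k ∈ Finset.range l, (C (1 + u k * μ) + C (u k) * X) - 1 := by
    convert map_dvd (taylorAlgHom μ) h using 1
    · simp
    · rw [map_sub, map_one, ctrlPoly, map_prod]
      congr 1
      refine Finset.prod_congr rfl fun k _ => ?_
      simp only [map_add, map_one, map_mul, taylorAlgHom_apply, taylor_C, taylor_X]
      ring
  exact hu (eq_zero_of_X_pow_three_dvd_prod_affine_sub_one _ _ u hshift k (Finset.mem_range.mpr hk))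

lemma rootMultiplicity_minpoly_le_two_of_prodCtrl_eq_one {n : ℕ} (B : Matrix (Fin n) (Fin n) ℝ)
    {l : ℕ} {u : ℕ → ℝ} {k : ℕ} (hk : k < l) (hu : u k ≠ 0) (h : prodCtrl B l u = 1) (μ : ℝ) :
    (minpoly ℝ B).rootMultiplicity μ ≤ 2 := by
  by_contra! h3
  have hdvd : minpoly ℝ B ∣ ctrlPoly l u - 1 :=
    minpoly.dvd ℝ B (by rw [map_sub, aeval_ctrlPoly, h, map_one, sub_self])
  exact not_X_sub_C_pow_three_dvd_ctrlPoly_sub_one hk hu μ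
    (((pow_dvd_pow _ h3).trans (pow_rootMultiplicity_dvd _ μ)).trans hdvd)

lemma dvd_prod_X_sub_C_pow {K : Type*} [Field K] [DecidableEq K] {p : K[X]} (hp : p.Splits)
    (hp0 : p ≠ 0) {k : ℕ} (hmult : ∀ a, p.rootMultiplicity a ≤ k) {T : Finset K}
    (hT : p.roots.toFinset ⊆ T) :
    p ∣ (∏ r ∈ T, (X - C r)) ^ k := by
  refine hp.dvd_of_roots_le_roots hp0 ?_
  rw [roots_pow, roots_prod_X_sub_C, Multiset.le_iff_count]
  intro a
  rw [count_roots, Multiset.count_nsmul]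
  by_cases ha : a ∈ p.roots
  · rw [Multiset.count_eq_one_of_mem T.nodup (hT (Multiset.mem_toFinset.mpr ha)), mul_one]
    exact hmult a
  · rw [← count_roots, Multiset.count_eq_zero_of_notMem ha]
    exact Nat.zero_le _

lemma exists_mem_Ioo_eq_zero_of_mul_neg {f : ℝ → ℝ} {a b : ℝ} (hab : a ≤ b)
    (hf : ContinuousOn f (Set.Icc a b)) (h : f a * f b < 0) : ∃ x ∈ Set.Ioo a b, f x = 0 := by
  rcases mul_neg_iff.mp h with ⟨ha, hb⟩ | ⟨ha, hb⟩
  · exact intermediate_value_Ioo' hab hf ⟨hb, ha⟩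
  · exact intermediate_value_Ioo hab hf ⟨ha, hb⟩

lemma splits_of_forall_exists_isRoot_mem_Ioo {f : ℝ[X]} {T : Finset ℝ} {δ : ℝ}
    (hdeg : f.natDegree ≤ T.card) (hsep : ∀ r ∈ T, ∀ t ∈ T, r ≠ t → 2 * δ ≤ |r - t|)
    (hroot : ∀ r ∈ T, ∃ x ∈ Set.Ioo (r - δ) (r + δ), f.IsRoot x) : f.Splits := by
  by_cases hf0 : f = 0
  · rw [hf0]
    exact Splits.zero
  choose! ρ hρ hρroot using hroot
  have hinj : Set.InjOn ρ T := by
    intro r hr t ht hrt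
    by_contra hne
    have h1 := hρ r hr
    have h2 := hρ t ht
    rw [hrt] at h1
    have : |r - t| < 2 * δ := by
      rw [abs_sub_lt_iff]
      constructor <;> linarith [h1.1, h1.2, h2.1, h2.2]
    linarith [hsep r hr t ht hne]
  have hmaps : ∀ r ∈ T, ρ r ∈ f.roots.toFinset := fun r hr =>
    Multiset.mem_toFinset.mpr ((mem_roots hf0).mpr (hρroot r hr))
  rw [splits_iff_card_roots]
  refine le_antisymm (card_roots' _) ?_
  calc f.natDegree ≤ T.card := hdeg
    _ ≤ f.roots.toFinset.card := Finset.card_le_card_of_injOn ρ hmaps hinj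
    _ ≤ Multiset.card f.roots := Multiset.toFinset_card_le _

lemma eventually_eval_sub_mul_eval_add_neg {q : ℝ[X]} {r : ℝ} (hq : q.eval r ≠ 0) :
    ∀ᶠ δ in 𝓝[≠] 0, ((X - C r) * q).eval (r - δ) * ((X - C r) * q).eval (r + δ) < 0 := by
  have hcont : Tendsto (fun δ => q.eval (r - δ) * q.eval (r + δ)) (𝓝 0)
      (𝓝 (q.eval r * q.eval r)) :=
    (by fun_prop : Continuous fun δ => q.eval (r - δ) * q.eval (r + δ)).tendsto' 0 _ (by simp)
  have hpos : ∀ᶠ δ in 𝓝 0, 0 < q.eval (r - δ) * q.eval (r + δ) :=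
    hcont.eventually_const_lt (mul_self_pos.mpr hq)
  filter_upwards [nhdsWithin_le_nhds hpos, self_mem_nhdsWithin] with δ hδ hδ0
  have hsq : 0 < δ ^ 2 := sq_pos_of_ne_zero hδ0
  have heval : ((X - C r) * q).eval (r - δ) * ((X - C r) * q).eval (r + δ) =
      -δ ^ 2 * (q.eval (r - δ) * q.eval (r + δ)) := by
    simp only [eval_mul, eval_sub, eval_X, eval_C]
    ring
  rw [heval]
  exact mul_neg_of_neg_of_pos (neg_neg_of_pos hsq) hδ

lemma eventually_splits_prod_X_sub_C_sub_C (T : Finset ℝ) :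
    ∀ᶠ c in 𝓝 0, (∏ r ∈ T, (X - C r) - C c).Splits := by
  set s := ∏ r ∈ T, (X - C r)
  have hsign : ∀ r ∈ T, ∀ᶠ δ in 𝓝[≠] 0, s.eval (r - δ) * s.eval (r + δ) < 0 := by
    intro r hr
    rw [show s = (X - C r) * ∏ t ∈ T.erase r, (X - C t) from (Finset.mul_prod_erase T _ hr).symm]
    refine eventually_eval_sub_mul_eval_add_neg ?_
    rw [eval_prod, Finset.prod_ne_zero_iff]
    intro t ht
    simpa [sub_eq_zero] using (Finset.ne_of_mem_erase ht).symm
  have hsep : ∀ᶠ δ in 𝓝 (0 : ℝ), ∀ r ∈ T, ∀ t ∈ T, r ≠ t → δ < |r - t| / 2 :=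
    (eventually_all_finset T).mpr fun r _ => (eventually_all_finset T).mpr fun t _ =>
      eventually_imp_distrib_left.mpr fun hrt =>
        eventually_lt_nhds (by positivity [sub_ne_zero.mpr hrt])
  have hgt : 𝓝[>] (0 : ℝ) ≤ 𝓝[≠] 0 := nhdsWithin_mono _ fun x hx => ne_of_gt hx
  obtain ⟨δ, ⟨hδ0, hsignδ⟩, hsepδ⟩ := (eventually_mem_nhdsWithin.and
    ((eventually_all_finset T).mpr fun r hr => hgt (hsign r hr))
    |>.and (nhdsWithin_le_nhds hsep)).exists
  rw [Set.mem_Ioi] at hδ0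
  have hstable : ∀ᶠ c in 𝓝 (0 : ℝ), ∀ r ∈ T,
      (s.eval (r - δ) - c) * (s.eval (r + δ) - c) < 0 := by
    refine (eventually_all_finset T).mpr fun r hr => ?_
    have : Tendsto (fun c => (s.eval (r - δ) - c) * (s.eval (r + δ) - c)) (𝓝 0)
        (𝓝 (s.eval (r - δ) * s.eval (r + δ))) :=
      (by fun_prop : Continuous fun c => (s.eval (r - δ) - c) * (s.eval (r + δ) - c)).tendsto' 0 _
        (by simp)
    exact this.eventually_lt_const (hsignδ r hr)
  filter_upwards [hstable] with c hc
  refine splits_of_forall_exists_isRoot_mem_Ioo (δ := δ)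
    (by rw [natDegree_sub_C, natDegree_finsetProd_X_sub_C_eq_card])
    (fun r hr t ht hrt => by linarith [hsepδ r hr t ht hrt]) fun r hr => ?_
  exact exists_mem_Ioo_eq_zero_of_mul_neg (f := fun x => (s - C c).eval x) (by linarith)
    (s - C c).continuous.continuousOn (by simpa using hc r hr)

lemma ne_zero_of_mem_roots_of_eval_zero_ne_zero {R : Type*} [CommRing R] [IsDomain R] {p : R[X]}
    (hp0 : p.eval 0 ≠ 0) {ρ : R} (hρ : ρ ∈ p.roots) : ρ ≠ 0 := by
  rintro rfl
  exact hp0 (mem_roots'.mp hρ).2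

lemma eq_prod_one_sub_C_inv_mul_X_of_splits {p : ℝ[X]} (hp : p.Splits) (hp0 : p.eval 0 = 1) :
    p = (p.roots.map fun ρ => 1 - C ρ⁻¹ * X).prod := by
  set M := (p.roots.map fun ρ => X - C ρ).prod
  have hroot0 : ∀ ρ ∈ p.roots, ρ ≠ 0 := fun ρ =>
    ne_zero_of_mem_roots_of_eval_zero_ne_zero (by simp [hp0])
  have hfactor : (p.roots.map fun ρ => 1 - C ρ⁻¹ * X).prod =
      C (p.roots.map fun ρ => -ρ⁻¹).prod * M := by
    rw [map_multiset_prod, Multiset.map_map, ← Multiset.prod_map_mul]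
    refine congrArg Multiset.prod (Multiset.map_congr rfl fun ρ hρ => ?_)
    have : C ρ⁻¹ * C ρ = (1 : ℝ[X]) := by rw [← C_mul, inv_mul_cancel₀ (hroot0 ρ hρ), C_1]
    simp only [Function.comp_apply, map_neg]
    linear_combination -this
  have hM0 : M.eval 0 ≠ 0 := by
    simpa [M, eval_multiset_prod, Multiset.prod_eq_zero_iff] using fun h => hroot0 0 h rfl
  have hq0 : ((p.roots.map fun ρ => 1 - C ρ⁻¹ * X).prod).eval 0 = 1 := by
    simp [eval_multiset_prod]
  have hpM : p = C p.leadingCoeff * M := hp.eq_prod_roots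
  rw [hpM, eval_mul, eval_C] at hp0
  rw [hfactor, eval_mul, eval_C] at hq0
  rw [hfactor, ← mul_right_cancel₀ hM0 (hp0.trans hq0.symm)]
  exact hpM

lemma exists_ctrlPoly_eq_of_splits {p : ℝ[X]} (hp : p.Splits) (hp0 : p.eval 0 = 1) :
    ∃ u : ℕ → ℝ, (∀ k, u k ≠ 0) ∧ ctrlPoly p.natDegree u = p := by
  set ρ := p.roots.toList
  refine ⟨fun k => -(ρ.getD k 1)⁻¹, fun k => ?_, ?_⟩
  · refine neg_ne_zero.mpr (inv_ne_zero ?_)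
    rcases lt_or_ge k ρ.length with hk | hk
    · rw [List.getD_eq_getElem _ _ hk]
      exact ne_zero_of_mem_roots_of_eval_zero_ne_zero (by simp [hp0])
        (Multiset.mem_toList.mp (List.getElem_mem hk))
    · rw [List.getD_eq_default _ _ hk]
      exact one_ne_zero
  · have hlen : p.natDegree = ρ.length := by
      rw [hp.natDegree_eq_card_roots, Multiset.length_toList]
    calc ctrlPoly p.natDegree (fun k => -(ρ.getD k 1)⁻¹)
        = (ρ.map fun r => 1 - C r⁻¹ * X).prod := by
          rw [hlen, ctrlPoly, Finset.prod_range, ← Fin.prod_univ_fun_getElem]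
          refine Finset.prod_congr rfl fun i _ => ?_
          rw [List.getD_eq_getElem _ _ i.2, map_neg, neg_mul, ← sub_eq_add_neg]
      _ = (p.roots.map fun r => 1 - C r⁻¹ * X).prod := by
          rw [← Multiset.prod_coe, ← Multiset.map_coe, Multiset.coe_toList]
      _ = p := (eq_prod_one_sub_C_inv_mul_X_of_splits hp hp0).symm

lemma exists_splits_eval_zero_eq_one_sq_dvd_sub_one (T : Finset ℝ) (h0 : (0 : ℝ) ∈ T) :
    ∃ p : ℝ[X], p.Splits ∧ p.eval 0 = 1 ∧ p.natDegree = 2 * T.card ∧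
      (∏ r ∈ T, (X - C r)) ^ 2 ∣ p - 1 := by
  set s := ∏ r ∈ T, (X - C r)
  have hs0 : s.eval 0 = 0 := by
    rw [eval_prod]
    exact Finset.prod_eq_zero h0 (by simp)
  obtain ⟨w, ⟨hw, hw'⟩, hw0⟩ : ∃ w : ℝ, ((s - C w).Splits ∧ (s - C (-w)).Splits) ∧ 0 < w := by
    have h := eventually_splits_prod_X_sub_C_sub_C T
    have hneg := (continuous_neg.tendsto' (0 : ℝ) 0 neg_zero).eventually h
    have hpos : ∀ᶠ w in 𝓝[>] (0 : ℝ), ((s - C w).Splits ∧ (s - C (-w)).Splits) ∧ 0 < w :=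
      ((h.and hneg).filter_mono nhdsWithin_le_nhds).and eventually_mem_nhdsWithin
    exact hpos.exists
  refine ⟨1 - C (w ^ 2)⁻¹ * s ^ 2, ?_, by simp [hs0], ?_, ⟨-C (w ^ 2)⁻¹, by ring⟩⟩
  · have hinv : C (w ^ 2)⁻¹ * C w ^ 2 = (1 : ℝ[X]) := by
      rw [← C_pow, ← C_mul, inv_mul_cancel₀ (by positivity), C_1]
    have hfactor : 1 - C (w ^ 2)⁻¹ * s ^ 2 = C (-(w ^ 2)⁻¹) * ((s - C w) * (s - C (-w))) := by
      simp only [map_neg]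
      linear_combination -hinv
    rw [hfactor]
    exact (hw.mul hw').C_mul _
  · have hT : 1 ≤ T.card := Finset.card_pos.mpr ⟨0, h0⟩
    have hsq : (C (w ^ 2)⁻¹ * s ^ 2).natDegree = 2 * T.card := by
      rw [natDegree_C_mul (by positivity), natDegree_pow, natDegree_finsetProd_X_sub_C_eq_card]
    rw [natDegree_sub_eq_right_of_natDegree_lt (by rw [natDegree_one, hsq]; omega), hsq]

lemma exists_prodCtrl_eq_one {n : ℕ} (B : Matrix (Fin n) (Fin n) ℝ)
    (hsplit : (minpoly ℝ B).Splits) (hmult : ∀ μ : ℝ, (minpoly ℝ B).rootMultiplicity μ ≤ 2) :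
    ∃ L : ℕ, 1 ≤ L ∧ ∃ u : ℕ → ℝ, (∀ k ≤ L, u k ≠ 0) ∧ prodCtrl B (L + 1) u = 1 := by
  set T := insert 0 (minpoly ℝ B).roots.toFinset
  have hT : 1 ≤ T.card := Finset.card_pos.mpr ⟨0, Finset.mem_insert_self 0 _⟩
  obtain ⟨p, hp, hp0, hpdeg, hsq⟩ :=
    exists_splits_eval_zero_eq_one_sq_dvd_sub_one T (Finset.mem_insert_self 0 _)
  have hdvd : minpoly ℝ B ∣ p - 1 :=
    (dvd_prod_X_sub_C_pow hsplit (minpoly.ne_zero (Algebra.IsIntegral.isIntegral B)) hmult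
      (Finset.subset_insert _ _)).trans hsq
  obtain ⟨u, hu, hpu⟩ := exists_ctrlPoly_eq_of_splits hp hp0
  refine ⟨p.natDegree - 1, by omega, u, fun k _ => hu k, ?_⟩
  rw [Nat.sub_add_cancel (by omega), ← aeval_ctrlPoly, hpu]
  rw [minpoly.dvd_iff, map_sub, map_one] at hdvd
  exact sub_eq_zero.mp hdvd

theorem stmt0_general {n : ℕ} (B : Matrix (Fin n) (Fin n) ℝ)
    (hsplit : B.charpoly.Splits) :
    (∃ L : ℕ, 1 ≤ L ∧ ∃ u : ℕ → ℝ, (∀ k ≤ L, u k ≠ 0) ∧ prodCtrl B (L + 1) u = 1) ↔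
      ∀ μ : ℝ, (minpoly ℝ B).rootMultiplicity μ ≤ 2 := by
  constructor
  · rintro ⟨L, -, u, hu, h⟩
    exact rootMultiplicity_minpoly_le_two_of_prodCtrl_eq_one B L.succ_pos (hu 0 L.zero_le) h
  · exact exists_prodCtrl_eq_one B
      (hsplit.of_dvd (charpoly_monic B).ne_zero (minpoly_dvd_charpoly B))

/-- existence of nonzero reals `u(0), …, u(L)` (with `L ≥ 1`) with
`(I + u(L)B)⋯(I + u(0)B) = I` iff every root of the minimal polynomial of `B`
has multiplicity at most two. -/
theorem stmt0 {n : ℕ} (hn : 1 ≤ n) (B : Matrix (Fin n) (Fin n) ℝ)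
    (hsplit : B.charpoly.Splits) (hdet : B.det ≠ 0) :
    (∃ L : ℕ, 1 ≤ L ∧ ∃ u : ℕ → ℝ, (∀ k ≤ L, u k ≠ 0) ∧ prodCtrl B (L + 1) u = 1) ↔
      ∀ μ : ℝ, (minpoly ℝ B).rootMultiplicity μ ≤ 2 :=
  stmt0_general B hsplit
end

section
/- Let n ≥ 1 and let B ∈ ℝ^{n×n} be a matrix whose characteristic polynomial splits over ℝ, all of whose eigenvalues are nonzero, which is cyclic (its minimal polynomial equals its characteristic polynomial), and every root of whose minimal polynomial has multiplicity at most two in the minimal polynomial. Let m be the number of distinct eigenvalues of B. Then there exist 2m+3 nonzero, real, and pairwise distinct numbers u(0), u(1), …, u(2m+1), u(2m+2) such that (I + u(2m+2)B)(I + u(2m+1)B)⋯(I + u(1)B)(I + u(0)B) = I. -/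
open Matrix MeasureTheory Polynomial

/-! Let `Z` consist of `0` and the `m` (nonzero) eigenvalues of `B`, and let `b > max Z`.
Since `minpoly B` splits with root multiplicities at most two, `Q = (X - b) ∏_{z ∈ Z} (X - z)²`
annihilates `B`. For large `c` the polynomial `P = 1 + c Q` is positive on `Z ∪ {b}` and negative
just left of each of these points, so it has `2 |Z| + 1 = 2m + 3 = deg P` distinct real roots `r`,
all nonzero as `P(0) = 1`. Hence `P = ∏ (1 - X / r)`, and with `u = -1 / r` the product
`∏ (I + u B)` is `P(B) = I + c Q(B) = I`. -/

open Filter Finset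

theorem Finset.exists_lt_forall_lt {α : Type*} [LinearOrder α] [DenselyOrdered α] [NoMinOrder α]
    {s : Finset α} {y : α} (hs : ∀ z ∈ s, z < y) : ∃ w < y, ∀ z ∈ s, z < w := by
  obtain ⟨y', hy'⟩ := exists_lt y
  have hmax : (insert y' s).max' (insert_nonempty _ _) < y :=
    (max'_lt_iff _ _).2 (forall_mem_insert _ _ _ |>.2 ⟨hy', hs⟩)
  obtain ⟨w, hmw, hwy⟩ := _root_.exists_between hmax
  exact ⟨w, hwy, fun z hz => (le_max' _ z (mem_insert_of_mem hz)).trans_lt hmw⟩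

theorem eventually_one_add_mul_neg {a : ℝ} (ha : a < 0) : ∀ᶠ c in atTop, 1 + c * a < 0 :=
  (tendsto_atBot_add_const_left _ 1 (tendsto_id.atTop_mul_const_of_neg ha)).eventually
    (eventually_lt_atBot 0)

theorem eventually_exists_roots_one_add_mul {H : ℝ → ℝ} (hH : Continuous H) (Y : Finset ℝ)
    (hY : ∀ y ∈ Y, 0 ≤ H y) (hneg : ∀ x ∉ Y, (∃ y ∈ Y, x < y) → H x < 0) :
    ∀ᶠ c in atTop, ∃ R : Finset ℝ, 2 * #Y ≤ #R + 1 ∧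
      ∀ r ∈ R, 1 + c * H r = 0 ∧ ∃ y ∈ Y, r < y := by
  classical
  -- A new maximum `y` adds one root on each side of a point `w` between `max Y` and `y`.
  induction Y using Finset.induction_on_max with
  | empty => exact Eventually.of_forall fun c => ⟨∅, by simp⟩
  | insert y Y hlt ih =>
    have hyY : y ∉ Y := fun h => (hlt y h).false
    have ih := ih (fun z hz => hY z (mem_insert_of_mem hz)) fun x hx ⟨z, hz, hxz⟩ =>
      hneg x (by simp [hx, (hxz.trans (hlt z hz)).ne]) ⟨z, mem_insert_of_mem hz, hxz⟩
    obtain ⟨w, hwy, hYw⟩ := Finset.exists_lt_forall_lt hlt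
    have hHw : H w < 0 := hneg w (by simpa [hwy.ne] using fun h => (hYw w h).false)
      ⟨y, mem_insert_self y Y, hwy⟩
    filter_upwards [ih, eventually_ge_atTop 0, eventually_one_add_mul_neg hHw]
      with c ⟨R, hRcard, hR⟩ hc hcw
    have hf : Continuous fun x => 1 + c * H x := by fun_prop
    have hpos : ∀ z ∈ insert y Y, 0 < 1 + c * H z := fun z hz => by
      nlinarith [mul_nonneg hc (hY z hz)]
    obtain ⟨r₂, ⟨hwr₂, hr₂y⟩, hr₂⟩ :=
      intermediate_value_Ioo hwy.le hf.continuousOn ⟨hcw, hpos y (mem_insert_self y Y)⟩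
    rcases Y.eq_empty_or_nonempty with rfl | hne
    · exact ⟨{r₂}, by simp, by simp [hr₂, hr₂y]⟩
    set z := Y.max' hne
    have hz : z ∈ Y := max'_mem Y hne
    obtain ⟨r₁, ⟨hzr₁, hr₁w⟩, hr₁⟩ := intermediate_value_Ioo' (hYw z hz).le hf.continuousOn
      ⟨hcw, hpos z (mem_insert_of_mem hz)⟩
    have hRr₁ : ∀ r ∈ R, r < r₁ := fun r hr => by
      obtain ⟨z', hz', hrz'⟩ := (hR r hr).2
      exact hrz'.trans_le (le_max' Y z' hz') |>.trans hzr₁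
    refine ⟨insert r₁ (insert r₂ R), ?_, ?_⟩
    · have hr₂R : r₂ ∉ R := fun h => ((hRr₁ r₂ h).trans (hr₁w.trans hwr₂)).false
      have hr₁R : r₁ ∉ insert r₂ R := by
        simp only [mem_insert, not_or]
        exact ⟨(hr₁w.trans hwr₂).ne, fun h => (hRr₁ r₁ h).false⟩
      rw [card_insert_of_notMem hr₁R, card_insert_of_notMem hr₂R, card_insert_of_notMem hyY]
      omega
    · simp only [forall_mem_insert]
      refine ⟨⟨hr₁, y, mem_insert_self y Y, hr₁w.trans hwy⟩, ⟨hr₂, y, mem_insert_self y Y, hr₂y⟩,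
        fun r hr => ⟨(hR r hr).1, ?_⟩⟩
      obtain ⟨z', hz', hrz'⟩ := (hR r hr).2
      exact ⟨z', mem_insert_of_mem hz', hrz'⟩

theorem eventually_exists_roots_one_add_C_mul {Z : Finset ℝ} {b : ℝ} (hZb : ∀ z ∈ Z, z < b) :
    ∀ᶠ c in atTop, ∃ R : Finset ℝ, 2 * #Z + 1 ≤ #R ∧
      ∀ r ∈ R, (1 + C c * ((X - C b) * (∏ z ∈ Z, (X - C z)) ^ 2)).IsRoot r := by
  classical
  set Q : ℝ[X] := (X - C b) * (∏ z ∈ Z, (X - C z)) ^ 2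
  have hQ : ∀ x, Q.eval x = (x - b) * (∏ z ∈ Z, (x - z)) ^ 2 := fun x => by
    simp [Q, eval_prod]
  have hbZ : b ∉ Z := fun h => (hZb b h).false
  have hY : ∀ y ∈ insert b Z, Q.eval y = 0 := by
    simp only [forall_mem_insert, hQ, sub_self, zero_mul, true_and]
    exact fun y hy => by rw [prod_eq_zero hy (sub_self y)]; ring
  have hneg : ∀ x ∉ insert b Z, (∃ y ∈ insert b Z, x < y) → Q.eval x < 0 := by
    rintro x hx ⟨y, hy, hxy⟩
    have hxb : x < b := hxy.trans_le <| by
      rcases mem_insert.1 hy with rfl | hy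
      exacts [le_rfl, (hZb y hy).le]
    have hprod : ∏ z ∈ Z, (x - z) ≠ 0 :=
      prod_ne_zero_iff.2 fun z hz => sub_ne_zero.2 fun h => hx (h ▸ mem_insert_of_mem hz)
    rw [hQ]
    exact mul_neg_of_neg_of_pos (sub_neg.2 hxb) (by positivity)
  filter_upwards [eventually_exists_roots_one_add_mul Q.continuous (insert b Z)
    (fun y hy => (hY y hy).ge) hneg] with c ⟨R, hRcard, hR⟩
  refine ⟨R, by rw [card_insert_of_notMem hbZ] at hRcard; omega, fun r hr => ?_⟩
  simpa [IsRoot] using (hR r hr).1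

theorem Polynomial.eq_prod_one_add_C_mul_X {K : Type*} [Field K] {p : K[X]} (h0 : p.eval 0 = 1)
    {R : Finset K} (hR : ∀ r ∈ R, p.IsRoot r) (hcard : p.natDegree ≤ #R) :
    p = ∏ r ∈ R, (1 + C (-r⁻¹) * X) := by
  have hp0 : p ≠ 0 := by rintro rfl; simp at h0
  have hroots : p.roots = R.val :=
    (Multiset.eq_of_le_of_card_le ((Multiset.le_iff_subset R.nodup).2 fun r hr =>
      (mem_roots hp0).2 (hR r hr)) ((card_roots' p).trans hcard)).symm
  have hsplit : p = C p.leadingCoeff * ∏ r ∈ R, (X - C r) := by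
    conv_lhs => rw [← C_leadingCoeff_mul_prod_multiset_X_sub_C
      (le_antisymm (card_roots' p) (hroots ▸ hcard))]
    rw [hroots]
    rfl
  have hR0 : ∀ r ∈ R, r ≠ 0 := fun r hr h => by simpa [IsRoot, h, h0] using hR r hr
  have hlead : p.leadingCoeff = ∏ r ∈ R, -r⁻¹ := by
    have := congrArg (eval 0) hsplit
    simp only [eval_mul, eval_C, eval_prod, eval_sub, eval_X, zero_sub, h0] at this
    rw [prod_congr rfl fun r _ => (inv_neg (a := r)).symm, prod_inv_distrib]
    exact eq_inv_of_mul_eq_one_left this.symm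
  rw [hsplit, hlead, map_prod, ← prod_mul_distrib]
  refine prod_congr rfl fun r hr => ?_
  rw [C_neg, neg_mul, mul_sub, ← C_mul, inv_mul_cancel₀ (hR0 r hr), C_1]
  ring

theorem exists_one_add_C_mul_eq_prod {Z : Finset ℝ} (hZ0 : 0 ∈ Z) {b : ℝ}
    (hZb : ∀ z ∈ Z, z < b) : ∃ c : ℝ, ∃ R : Finset ℝ, 0 ∉ R ∧ #R = 2 * #Z + 1 ∧
      1 + C c * ((X - C b) * (∏ z ∈ Z, (X - C z)) ^ 2) = ∏ r ∈ R, (1 + C (-r⁻¹) * X) := by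
  obtain ⟨c, R, hRcard, hR⟩ := (eventually_exists_roots_one_add_C_mul hZb).exists
  set P := 1 + C c * ((X - C b) * (∏ z ∈ Z, (X - C z)) ^ 2)
  have hP0 : P.eval 0 = 1 := by
    simp only [P, eval_add, eval_one, eval_mul, eval_C, eval_pow, eval_prod]
    rw [prod_eq_zero hZ0 (by simp)]
    ring
  have hPdeg : P.natDegree ≤ 2 * #Z + 1 := by
    have hmonic : ∀ z ∈ Z, (X - C z).Monic := fun z _ => monic_X_sub_C z
    refine (natDegree_add_le _ _).trans (max_le (by simp) ((natDegree_C_mul_le _ _).trans ?_))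
    rw [(monic_X_sub_C b).natDegree_mul ((monic_prod_of_monic _ _ hmonic).pow 2), natDegree_pow,
      natDegree_prod_of_monic _ _ hmonic]
    simp only [natDegree_sub_C, natDegree_X, sum_const, smul_eq_mul, mul_one]
    omega
  have hRdeg : #R ≤ P.natDegree :=
    card_le_degree_of_subset_roots fun r hr =>
      (mem_roots (by rintro h; simp [h] at hP0)).2 (hR r hr)
  exact ⟨c, R, fun h => by simpa [IsRoot, hP0] using hR 0 h, by omega,
    eq_prod_one_add_C_mul_X hP0 hR (by omega)⟩

theorem exists_prod_range_eq_prod_one_add_C_mul_X {R : Finset ℝ} (hR0 : 0 ∉ R) :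
    ∃ u : ℕ → ℝ, (∀ k < #R, u k ≠ 0) ∧ (∀ k < #R, ∀ l < #R, k ≠ l → u k ≠ u l) ∧
      ∏ k ∈ range #R, (1 + C (u k) * X) = ∏ r ∈ R, (1 + C (-r⁻¹) * X) := by
  obtain ⟨e, he⟩ : ∃ e : ℕ → ℝ, Set.BijOn e (range #R) R :=
    (range #R).finite_toSet.exists_bijOn_of_encard_eq <| by
      rw [Set.encard_coe_eq_coe_finsetCard, Set.encard_coe_eq_coe_finsetCard, card_range]
  have hmem : ∀ k < #R, k ∈ (range #R : Set ℕ) := fun k hk => by simpa using hk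
  refine ⟨fun k => -(e k)⁻¹, fun k hk => ?_, fun k hk l hl hkl => ?_,
    prod_nbij (g := fun r => 1 + C (-r⁻¹) * X) e he.mapsTo he.injOn he.surjOn fun _ _ => rfl⟩
  · simpa using ne_of_mem_of_not_mem (he.mapsTo (hmem k hk)) hR0
  · simpa using he.injOn.ne (hmem k hk) (hmem l hl) hkl

theorem Polynomial.Splits.dvd_sq_prod_X_sub_C {K : Type*} [Field K] [DecidableEq K] {p : K[X]}
    (hp : p.Splits) (hp0 : p ≠ 0) (hmult : ∀ a, p.rootMultiplicity a ≤ 2) {Z : Finset K}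
    (hZ : p.roots.toFinset ⊆ Z) : p ∣ (∏ z ∈ Z, (X - C z)) ^ 2 := by
  refine hp.dvd_of_roots_le_roots hp0 ?_
  rw [roots_pow, roots_prod_X_sub_C, Multiset.le_iff_count]
  intro a
  rw [count_roots, Multiset.count_nsmul]
  by_cases ha : a ∈ Z
  · rw [Multiset.count_eq_one_of_mem Z.nodup ha]
    exact hmult a
  · have : a ∉ p.roots := fun h => ha (hZ (Multiset.mem_toFinset.2 h))
    rw [← count_roots, Multiset.count_eq_zero_of_notMem this]
    exact Nat.zero_le _

theorem Matrix.zero_notMem_roots_charpoly {n : ℕ} {B : Matrix (Fin n) (Fin n) ℝ}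
    (hdet : B.det ≠ 0) : (0 : ℝ) ∉ B.charpoly.roots := by
  simp [mem_roots B.charpoly_monic.ne_zero, eval_charpoly, det_neg, hdet]

theorem aeval_one_add_C_mul_X {n : ℕ} (B : Matrix (Fin n) (Fin n) ℝ) (t : ℝ) :
    aeval B (1 + C t * X) = 1 + t • B := by
  rw [map_add, map_one, map_mul, aeval_C, aeval_X, Algebra.smul_def]

theorem prodCtrl_eq_aeval {n : ℕ} (B : Matrix (Fin n) (Fin n) ℝ) (u : ℕ → ℝ) (l : ℕ) :
    prodCtrl B l u = aeval B (∏ k ∈ range l, (1 + C (u k) * X)) := by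
  induction l with
  | zero => simp [prodCtrl]
  | succ l ih =>
    rw [prod_range_succ, mul_comm, map_mul, ← ih, aeval_one_add_C_mul_X]
    simp [prodCtrl, List.range_succ]

theorem stmt1_general {n : ℕ} (B : Matrix (Fin n) (Fin n) ℝ)
    (hsplit : B.charpoly.Splits) (hdet : B.det ≠ 0)
    (hcyc : minpoly ℝ B = B.charpoly)
    (hmult : ∀ μ : ℝ, (minpoly ℝ B).rootMultiplicity μ ≤ 2)
    (m : ℕ) (hm : m = B.charpoly.roots.toFinset.card) :
    ∃ u : ℕ → ℝ, (∀ k ≤ 2 * m + 2, u k ≠ 0) ∧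
      (∀ k ≤ 2 * m + 2, ∀ l ≤ 2 * m + 2, k ≠ l → u k ≠ u l) ∧
      prodCtrl B (2 * m + 3) u = 1 := by
  classical
  set Z := insert 0 B.charpoly.roots.toFinset
  have hZ : #Z = m + 1 := by
    rw [card_insert_of_notMem (by simpa using zero_notMem_roots_charpoly hdet), hm]
  set b := Z.max' (insert_nonempty _ _) + 1
  have hQB : aeval B ((X - C b) * (∏ z ∈ Z, (X - C z)) ^ 2) = 0 := by
    have hdvd : minpoly ℝ B ∣ (∏ z ∈ Z, (X - C z)) ^ 2 := by
      rw [hcyc] at hmult ⊢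
      exact hsplit.dvd_sq_prod_X_sub_C B.charpoly_monic.ne_zero hmult (subset_insert 0 _)
    obtain ⟨q, hq⟩ := hdvd
    rw [map_mul, hq, map_mul, minpoly.aeval, zero_mul, mul_zero]
  obtain ⟨c, R, hR0, hRcard, hP⟩ := exists_one_add_C_mul_eq_prod (Z := Z) (b := b)
    (mem_insert_self 0 _) fun z hz => (le_max' Z z hz).trans_lt (lt_add_one _)
  obtain ⟨u, hu0, hu, hprod⟩ := exists_prod_range_eq_prod_one_add_C_mul_X hR0
  refine ⟨u, fun k hk => hu0 k (by omega), fun k hk l hl => hu k (by omega) l (by omega), ?_⟩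
  rw [prodCtrl_eq_aeval, show 2 * m + 3 = #R by omega, hprod, ← hP, map_add, map_one, map_mul,
    hQB, mul_zero, add_zero]

/-- if moreover `B` is cyclic, then `2m+3` nonzero, pairwise distinct real
numbers `u(0), …, u(2m+2)` exist with `(I + u(2m+2)B)⋯(I + u(0)B) = I`, where `m` is the
number of distinct eigenvalues of `B`. -/
theorem stmt1 {n : ℕ} (hn : 1 ≤ n) (B : Matrix (Fin n) (Fin n) ℝ)
    (hsplit : B.charpoly.Splits) (hdet : B.det ≠ 0)
    (hcyc : minpoly ℝ B = B.charpoly)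
    (hmult : ∀ μ : ℝ, (minpoly ℝ B).rootMultiplicity μ ≤ 2)
    (m : ℕ) (hm : m = B.charpoly.roots.toFinset.card) :
    ∃ u : ℕ → ℝ, (∀ k ≤ 2 * m + 2, u k ≠ 0) ∧
      (∀ k ≤ 2 * m + 2, ∀ l ≤ 2 * m + 2, k ≠ l → u k ≠ u l) ∧
      prodCtrl B (2 * m + 3) u = 1 :=
  stmt1_general B hsplit hdet hcyc hmult m hm
end

section
/- Let n = m + r and let B ∈ ℝ^{n×n} be the block-diagonal Jordan matrix consisting of r two-dimensional Jordan blocks [[λ_i, 1],[0, λ_i]] for i = 1, …, r followed by the 1×1 blocks λ_{r+1}, …, λ_m, where λ_1, …, λ_m are nonzero real and pairwise distinct. Then for every ξ = (ξ_1, …, ξ_n)ᵀ ∈ ℝⁿ, det[ξ, Bξ, B²ξ, …, B^{n−1}ξ] = 0 if and only if ξ_2 ξ_4 ⋯ ξ_{2r} ξ_{2r+1} ⋯ ξ_n = 0. -/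
open Matrix MeasureTheory Polynomial

noncomputable def dEig (r : ℕ) (lam : ℕ → ℝ) (a : ℕ) : ℝ :=
  if a < 2 * r then lam (a / 2) else lam (a - r)

noncomputable def cVdm (n r : ℕ) (lam : ℕ → ℝ) : Matrix (Fin n) (Fin n) ℝ :=
  Matrix.of fun a j => if (a : ℕ) < 2 * r ∧ (a : ℕ) % 2 = 0
    then ((j : ℕ) : ℝ) * dEig r lam a ^ ((j : ℕ) - 1)
    else dEig r lam a ^ (j : ℕ)

lemma sq_dvd_of_root_root_deriv {q : ℝ[X]} {a : ℝ}
    (h1 : q.eval a = 0) (h2 : (derivative q).eval a = 0) : (X - C a) ^ 2 ∣ q := by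
  obtain ⟨g, hg⟩ := Polynomial.dvd_iff_isRoot.mpr h1
  have hg' : g.eval a = 0 := by
    rw [hg] at h2
    simp [Polynomial.derivative_mul] at h2
    exact h2
  obtain ⟨h, hh⟩ := Polynomial.dvd_iff_isRoot.mpr hg'
  exact ⟨h, by rw [hg, hh]; ring⟩

lemma cVdm_det_ne_zero {m r n : ℕ} (hr : r ≤ m) (hn : n = m + r)
    (lam : ℕ → ℝ) (hdist : ∀ i < m, ∀ j < m, i ≠ j → lam i ≠ lam j) :
    (cVdm n r lam).det ≠ 0 := by
  intro h0
  obtain ⟨v, hv, hWv⟩ := Matrix.exists_mulVec_eq_zero_iff.mpr h0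
  set q : ℝ[X] := ∑ j : Fin n, C (v j) * X ^ (j : ℕ) with hq
  -- q ≠ 0
  obtain ⟨j0, hj0⟩ := Function.ne_iff.mp hv
  have hcoeff : ∀ k : Fin n, q.coeff (k : ℕ) = v k := by
    intro k
    rw [hq, Polynomial.finset_sum_coeff]
    rw [Finset.sum_eq_single k]
    · simp
    · intro b _ hb
      have hbk : (b : ℕ) ≠ (k : ℕ) := fun hc => hb (Fin.ext hc)
      simp [Polynomial.coeff_C_mul, Polynomial.coeff_X_pow, hbk]
      exact fun hc => absurd (Fin.ext hc.symm) hb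
    · intro hk; exact absurd (Finset.mem_univ k) hk
  have hq0 : q ≠ 0 := by
    intro h
    apply hj0
    have := hcoeff j0
    rw [h] at this
    simpa using this.symm
  -- row equalities
  have hrow : ∀ a : Fin n, ∑ j : Fin n, (cVdm n r lam) a j * v j = 0 := by
    intro a
    have := congrFun hWv a
    simpa [Matrix.mulVec, dotProduct] using this
  have heval : ∀ x : ℝ, q.eval x = ∑ j : Fin n, v j * x ^ (j : ℕ) := by
    intro x
    rw [hq, Polynomial.eval_finset_sum]
    simp
  have hderiv : ∀ x : ℝ, (derivative q).eval x =
      ∑ j : Fin n, v j * (((j : ℕ) : ℝ) * x ^ ((j : ℕ) - 1)) := by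
    intro x
    rw [hq, map_sum, Polynomial.eval_finset_sum]
    apply Finset.sum_congr rfl
    intro j _
    rw [Polynomial.derivative_C_mul_X_pow]
    simp [mul_assoc]
  have h2rn : 2 * r ≤ n := by omega
  -- double roots at lam i for i < r
  have hroots2 : ∀ i < r, (X - C (lam i)) ^ 2 ∣ q := by
    intro i hi
    have h1 : q.eval (lam i) = 0 := by
      have := hrow ⟨2 * i + 1, by omega⟩
      rw [heval]
      rw [← this]
      apply Finset.sum_congr rfl
      intro j _
      have : ¬((2 * i + 1) % 2 = 0) := by omega
      simp only [cVdm, Matrix.of_apply, dEig]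
      rw [if_neg (by simpa using fun _ => this), if_pos (by omega)]
      have h2 : (2 * i + 1) / 2 = i := by omega
      rw [h2, mul_comm]
    have h2 : (derivative q).eval (lam i) = 0 := by
      have := hrow ⟨2 * i, by omega⟩
      rw [hderiv]
      rw [← this]
      apply Finset.sum_congr rfl
      intro j _
      simp only [cVdm, Matrix.of_apply, dEig]
      rw [if_pos (by constructor <;> omega), if_pos (by omega)]
      have h2 : 2 * i / 2 = i := by omega
      rw [h2, mul_comm]
    exact sq_dvd_of_root_root_deriv h1 h2
  -- simple roots at lam k for r ≤ k < m
  have hroots1 : ∀ k, r ≤ k → k < m → (X - C (lam k)) ∣ q := by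
    intro k hk1 hk2
    apply Polynomial.dvd_iff_isRoot.mpr
    have := hrow ⟨k + r, by omega⟩
    show q.eval (lam k) = 0
    rw [heval, ← this]
    apply Finset.sum_congr rfl
    intro j _
    simp only [cVdm, Matrix.of_apply, dEig]
    rw [if_neg (by push_neg; intro h; omega), if_neg (by omega)]
    have h2 : k + r - r = k := by omega
    rw [h2, mul_comm]
  -- the product polynomial
  set P : ℝ[X] := ∏ i ∈ Finset.range m, (X - C (lam i)) ^ (if i < r then 2 else 1) with hP
  have hPdvd : P ∣ q := by
    apply Finset.prod_dvd_of_coprime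
    · intro i hi j hj hij
      simp only [Finset.coe_range, Set.mem_Iio] at hi hj
      have : IsCoprime (X - C (lam i)) (X - C (lam j)) :=
        Polynomial.isCoprime_X_sub_C_of_isUnit_sub
          (sub_ne_zero_of_ne (hdist i hi j hj hij)).isUnit
      exact (this.pow : _)
    · intro i hi
      simp only [Finset.mem_range] at hi
      by_cases h : i < r
      · rw [if_pos h]; exact hroots2 i h
      · rw [if_neg h, pow_one]; exact hroots1 i (by omega) hi
  have hPdeg : P.natDegree = n := by
    rw [hP, Polynomial.natDegree_prod]
    · have : ∀ i ∈ Finset.range m,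
          ((X - C (lam i)) ^ (if i < r then 2 else 1)).natDegree = (if i < r then 2 else 1) := by
        intro i _
        split_ifs <;>
          rw [(Polynomial.monic_X_sub_C (lam i)).natDegree_pow, Polynomial.natDegree_X_sub_C,
            mul_one]
      rw [Finset.sum_congr rfl this]
      rw [Finset.range_eq_Ico, ← Finset.sum_Ico_consecutive _ (Nat.zero_le r) hr]
      rw [Finset.sum_congr rfl (fun i hi => if_pos (Finset.mem_Ico.mp hi).2),
        Finset.sum_congr (rfl : Finset.Ico r m = Finset.Ico r m)
          (fun i hi => if_neg (by have := (Finset.mem_Ico.mp hi).1; omega))]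
      simp [Finset.sum_const, Nat.card_Ico]
      omega
    · intro i _
      exact pow_ne_zero _ (Polynomial.X_sub_C_ne_zero (lam i))
  have hqdeg : q.natDegree < n := by
    have hdlt : q.degree < (n : WithBot ℕ) := by
      refine lt_of_le_of_lt (Polynomial.degree_sum_le _ _) ?_
      rw [Finset.sup_lt_iff (by exact_mod_cast WithBot.bot_lt_coe n)]
      intro j _
      refine lt_of_le_of_lt (Polynomial.degree_C_mul_X_pow_le _ _) ?_
      exact_mod_cast Nat.cast_lt.mpr j.isLt
    exact (Polynomial.natDegree_lt_iff_degree_lt hq0).mpr hdlt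
  have := Polynomial.natDegree_le_of_dvd hPdvd hq0
  omega

/-- for the block-diagonal Jordan matrix `B = pairJordan n r lam` with
`n = m + r` and `lam 0, …, lam (m-1)` nonzero and pairwise distinct,
`det [ξ, Bξ, …, B^{n-1}ξ] = 0` iff `ξ_2 ξ_4 ⋯ ξ_{2r} ξ_{2r+1} ⋯ ξ_n = 0`
(indices `1, 3, …, 2r-1` and `2r, …, n-1` in 0-based indexing). -/
theorem stmt5 {m r n : ℕ} (hr : r ≤ m) (hn : n = m + r)
    (lam : ℕ → ℝ) (hnz : ∀ i < m, lam i ≠ 0)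
    (hdist : ∀ i < m, ∀ j < m, i ≠ j → lam i ≠ lam j)
    (ξ : Fin n → ℝ) :
    (ctrlMat (pairJordan n r lam) ξ).det = 0 ↔
      (∏ i ∈ Finset.univ.filter
          (fun i : Fin n => ((i : ℕ) % 2 = 1 ∧ (i : ℕ) < 2 * r) ∨ 2 * r ≤ (i : ℕ)),
        ξ i) = 0 := by
  have h2rn : 2 * r ≤ n := by omega
  set dd : Fin n → ℝ := fun a => dEig r lam (a : ℕ) with hdd
  set Nm : Matrix (Fin n) (Fin n) ℝ :=
    Matrix.of (fun a b : Fin n =>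
      if (b : ℕ) = (a : ℕ) + 1 ∧ (a : ℕ) < 2 * r ∧ (a : ℕ) % 2 = 0 then (1 : ℝ) else 0)
    with hNm
  -- decomposition B = D + N
  have hB : pairJordan n r lam = Matrix.diagonal dd + Nm := by
    ext a b
    by_cases hab : (a : ℕ) = (b : ℕ)
    · have hab' : a = b := Fin.ext hab
      subst hab'
      simp only [pairJordan, Matrix.of_apply, Matrix.add_apply, Matrix.diagonal_apply_eq,
        hNm, hdd, dEig]
      rw [if_pos trivial, if_neg (by omega : ¬((a:ℕ) = (a:ℕ) + 1 ∧ (a:ℕ) < 2 * r ∧ (a:ℕ) % 2 = 0)), add_zero]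
    · have hab' : a ≠ b := fun h => hab (by rw [h])
      simp only [pairJordan, Matrix.of_apply, Matrix.add_apply, hNm, hdd]
      rw [if_neg hab, Matrix.diagonal_apply_ne _ hab', zero_add]
  have hpair : ∀ a b : Fin n,
      ((b : ℕ) = (a : ℕ) + 1 ∧ (a : ℕ) < 2 * r ∧ (a : ℕ) % 2 = 0) → dd a = dd b := by
    rintro a b ⟨h1, h2, h3⟩
    simp only [hdd, dEig]
    rw [if_pos h2, if_pos (by omega : (b : ℕ) < 2 * r), h1]
    congr 1
    omega
  have hcomm : Nm * Matrix.diagonal dd = Matrix.diagonal dd * Nm := by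
    ext a b
    rw [Matrix.mul_diagonal, Matrix.diagonal_mul]
    simp only [hNm, Matrix.of_apply]
    split_ifs with h
    · rw [← hpair a b h]; ring
    · ring
  have hN2 : Nm * Nm = 0 := by
    ext a b
    rw [Matrix.mul_apply]
    rw [show (0 : Matrix (Fin n) (Fin n) ℝ) a b = 0 from rfl]
    apply Finset.sum_eq_zero
    intro c _
    simp only [hNm, Matrix.of_apply]
    by_cases h1 : (c : ℕ) = (a : ℕ) + 1 ∧ (a : ℕ) < 2 * r ∧ (a : ℕ) % 2 = 0
    · obtain ⟨e1, e2, e3⟩ := h1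
      rw [if_neg (by omega : ¬((b : ℕ) = (c : ℕ) + 1 ∧ (c : ℕ) < 2 * r ∧ (c : ℕ) % 2 = 0)),
        mul_zero]
    · rw [if_neg h1, zero_mul]
  -- powers of B
  have hpow : ∀ s : ℕ, pairJordan n r lam ^ (s + 1) =
      Matrix.diagonal (fun a => dd a ^ (s + 1)) +
        ((s : ℝ) + 1) • (Matrix.diagonal (fun a => dd a ^ s) * Nm) := by
    intro s
    induction s with
    | zero =>
      have h1 : Matrix.diagonal (fun a : Fin n => dd a ^ 0) = 1 := by
        simp
      have h2 : (fun a : Fin n => dd a ^ (0 + 1)) = dd := by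
        funext a; rw [pow_one]
      rw [pow_one, hB, h1, one_mul, h2]
      norm_num
    | succ s ih =>
      have f1 : Matrix.diagonal (fun a : Fin n => dd a ^ (s + 1)) * Matrix.diagonal dd
          = Matrix.diagonal (fun a : Fin n => dd a ^ (s + 1 + 1)) := by
        rw [Matrix.diagonal_mul_diagonal]
        exact congrArg Matrix.diagonal (funext fun a => (pow_succ (dd a) (s + 1)).symm)
      have f2 : Matrix.diagonal (fun a : Fin n => dd a ^ s) * Nm * Matrix.diagonal dd
          = Matrix.diagonal (fun a : Fin n => dd a ^ (s + 1)) * Nm := by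
        rw [mul_assoc, hcomm, ← mul_assoc, Matrix.diagonal_mul_diagonal]
        exact congrArg (· * Nm)
          (congrArg Matrix.diagonal (funext fun a => (pow_succ (dd a) s).symm))
      rw [pow_succ, ih, hB, add_mul, mul_add, mul_add, f1, smul_mul_assoc, smul_mul_assoc,
        f2, mul_assoc, hN2, mul_zero, smul_zero, add_zero]
      push_cast
      module
  -- auxiliary vectors / matrices
  set ξ' : ℕ → ℝ := fun k => if h : k < n then ξ ⟨k, h⟩ else 0 with hξ'
  set g : Fin n → ℝ :=
    fun a => if (a : ℕ) < 2 * r ∧ (a : ℕ) % 2 = 0 then ξ' ((a : ℕ) + 1) else ξ a with hg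
  set W := cVdm n r lam with hW
  set T : Matrix (Fin n) (Fin n) ℝ := Matrix.diagonal g + Matrix.diagonal ξ * Nm with hT
  have hNv : ∀ a : Fin n, (Nm *ᵥ ξ) a =
      if (a : ℕ) < 2 * r ∧ (a : ℕ) % 2 = 0 then ξ' ((a : ℕ) + 1) else 0 := by
    intro a
    rw [Matrix.mulVec, dotProduct]
    by_cases h : (a : ℕ) < 2 * r ∧ (a : ℕ) % 2 = 0
    · obtain ⟨h1, h2⟩ := h
      have hb : (a : ℕ) + 1 < n := by omega
      rw [if_pos ⟨h1, h2⟩, Finset.sum_eq_single (⟨(a : ℕ) + 1, hb⟩ : Fin n)]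
      · simp only [hNm, Matrix.of_apply]
        rw [if_pos ⟨by simp, h1, h2⟩, one_mul]
        simp only [hξ']
        rw [dif_pos hb]
      · intro b _ hbne
        simp only [hNm, Matrix.of_apply]
        rw [if_neg (fun hc => hbne (Fin.ext hc.1)), zero_mul]
      · intro hmem; exact absurd (Finset.mem_univ _) hmem
    · rw [if_neg h]
      apply Finset.sum_eq_zero
      intro b _
      simp only [hNm, Matrix.of_apply]
      rw [if_neg (fun hc => h ⟨hc.2.1, hc.2.2⟩), zero_mul]
  have hNW : ∀ a j : Fin n, (Nm * W) a j =
      if (a : ℕ) < 2 * r ∧ (a : ℕ) % 2 = 0 then dd a ^ (j : ℕ) else 0 := by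
    intro a j
    rw [Matrix.mul_apply]
    by_cases h : (a : ℕ) < 2 * r ∧ (a : ℕ) % 2 = 0
    · obtain ⟨h1, h2⟩ := h
      have hb : (a : ℕ) + 1 < n := by omega
      rw [if_pos ⟨h1, h2⟩, Finset.sum_eq_single (⟨(a : ℕ) + 1, hb⟩ : Fin n)]
      · simp only [hNm, Matrix.of_apply]
        rw [if_pos ⟨by simp, h1, h2⟩, one_mul, hW]
        simp only [cVdm, Matrix.of_apply]
        rw [if_neg (by first | omega | (simp only [Fin.val_mk]; omega))]
        have := hpair a ⟨(a : ℕ) + 1, hb⟩ ⟨rfl, h1, h2⟩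
        simp only [hdd, Fin.val_mk] at this ⊢
        rw [← this]
      · intro b _ hbne
        simp only [hNm, Matrix.of_apply]
        rw [if_neg (fun hc => hbne (Fin.ext hc.1)), zero_mul]
      · intro hmem; exact absurd (Finset.mem_univ _) hmem
    · rw [if_neg h]
      apply Finset.sum_eq_zero
      intro b _
      simp only [hNm, Matrix.of_apply]
      rw [if_neg (fun hc => h ⟨hc.2.1, hc.2.2⟩), zero_mul]
  -- the factorization
  have hMeq : ctrlMat (pairJordan n r lam) ξ = T * W := by
    ext a j
    have hRHS : (T * W) a j = g a * W a j + ξ a * ((Nm * W) a j) := by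
      rw [hT, Matrix.add_mul, Matrix.add_apply, Matrix.diagonal_mul, Matrix.mul_assoc,
        Matrix.diagonal_mul]
    rw [hRHS, hNW a j]
    simp only [ctrlMat, Matrix.of_apply]
    rw [hW]
    simp only [cVdm, Matrix.of_apply]
    have hddj : dEig r lam (a : ℕ) = dd a := rfl
    rw [hddj]
    cases hj : (j : ℕ) with
    | zero =>
      rw [pow_zero, Matrix.one_mulVec]
      by_cases h : (a : ℕ) < 2 * r ∧ (a : ℕ) % 2 = 0
      · rw [if_pos h, if_pos h]
        simp [hg, h]
      · rw [if_neg h, if_neg h]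
        simp only [hg]
        rw [if_neg h]
        simp
    | succ s =>
      rw [hpow s, Matrix.add_mulVec, Pi.add_apply, Matrix.smul_mulVec, Pi.smul_apply,
        Matrix.mulVec_diagonal, ← Matrix.mulVec_mulVec, Matrix.mulVec_diagonal, hNv a]
      by_cases h : (a : ℕ) < 2 * r ∧ (a : ℕ) % 2 = 0
      · rw [if_pos h, if_pos h, if_pos h]
        simp only [hg]
        rw [if_pos h]
        have hss : s + 1 - 1 = s := rfl
        rw [hss]
        simp only [smul_eq_mul]
        push_cast
        ring
      · rw [if_neg h, if_neg h, if_neg h]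
        simp only [hg]
        rw [if_neg h]
        simp
        ring
  -- T is upper triangular
  have hTtri : T.BlockTriangular id := by
    intro i j hij
    have hij' : (j : ℕ) < (i : ℕ) := hij
    rw [hT, Matrix.add_apply, Matrix.diagonal_apply_ne _ (by
        intro h; subst h; exact lt_irrefl _ hij'), Matrix.diagonal_mul]
    simp only [hNm, Matrix.of_apply]
    rw [if_neg (by omega), mul_zero, add_zero]
  have hdetT : T.det = ∏ a, g a := by
    rw [Matrix.det_of_upperTriangular hTtri]
    apply Finset.prod_congr rfl
    intro a _
    rw [hT, Matrix.add_apply, Matrix.diagonal_apply_eq, Matrix.diagonal_mul]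
    simp only [hNm, Matrix.of_apply]
    rw [if_neg (by omega), mul_zero, add_zero]
  -- conclusion
  have hWne : W.det ≠ 0 := cVdm_det_ne_zero hr hn lam hdist
  rw [hMeq, Matrix.det_mul, hdetT, mul_eq_zero, or_iff_left hWne,
    Finset.prod_eq_zero_iff, Finset.prod_eq_zero_iff]
  constructor
  · rintro ⟨a, -, ha⟩
    by_cases h : (a : ℕ) < 2 * r ∧ (a : ℕ) % 2 = 0
    · obtain ⟨h1, h2⟩ := h
      have hb : (a : ℕ) + 1 < n := by omega
      refine ⟨⟨(a : ℕ) + 1, hb⟩, Finset.mem_filter.mpr ⟨Finset.mem_univ _,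
        Or.inl ⟨by first | omega | (simp only [Fin.val_mk]; omega),
          by first | omega | (simp only [Fin.val_mk]; omega)⟩⟩, ?_⟩
      simp only [hg] at ha
      rw [if_pos ⟨h1, h2⟩] at ha
      simp only [hξ'] at ha
      rw [dif_pos hb] at ha
      exact ha
    · refine ⟨a, Finset.mem_filter.mpr ⟨Finset.mem_univ _, by omega⟩, ?_⟩
      simp only [hg] at ha
      rwa [if_neg h] at ha
  · rintro ⟨i, hi, hxi⟩
    refine ⟨i, Finset.mem_univ _, ?_⟩
    have hcond := (Finset.mem_filter.mp hi).2
    simp only [hg]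
    rw [if_neg (by omega)]
    exact hxi
end

section
/- Let n = m + r and let B ∈ ℝ^{n×n} be the block-diagonal Jordan matrix consisting of r two-dimensional Jordan blocks [[λ_i, 1],[0, λ_i]] for i = 1, …, r followed by the 1×1 blocks λ_{r+1}, …, λ_m, where λ_1, …, λ_m are nonzero real and pairwise distinct. Let ξ, η ∈ ℝⁿ satisfy ξ_i η_i > 0 for every index i in {2, 4, …, 2r} ∪ {2r+1, …, n}, and let T ∈ ℝ^{n×n} be the transition matrix defined blockwise by: for each i = 1, …, r, the 2×2 diagonal block with (2i−1,2i−1) and (2i,2i) entries equal to η_{2i}/ξ_{2i} and (2i−1,2i) entry equal to η_{2i−1}/ξ_{2i} − ξ_{2i−1}η_{2i}/ξ_{2i}², and for each j = 2r+1, …, n the diagonal entry η_j/ξ_j, with all other entries zero. Then Tξ = η, T commutes with B, and there exists a sequence (S_q)_{q≥1} of real n×n matrices such that for every q, S_q^q = T and S_q commutes with B, and S_q converges to the identity matrix as q → ∞. -/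
open Matrix MeasureTheory Polynomial

/-- Extension of a vector on `Fin n` to `ℕ` (by zero). -/
def extVec {n : ℕ} (ξ : Fin n → ℝ) : ℕ → ℝ := fun k => if h : k < n then ξ ⟨k, h⟩ else 0

/-- The transition matrix `T_{ξ → η}` of the paper (0-based indexing): for each of the `r`
two-dimensional blocks occupying indices `2t, 2t+1`, the diagonal entries are
`η_{2t+1}/ξ_{2t+1}` and the superdiagonal entry is
`η_{2t}/ξ_{2t+1} - ξ_{2t} η_{2t+1}/ξ_{2t+1}²`; for `j ≥ 2r` the diagonal entry is
`η_j/ξ_j`; all other entries vanish. -/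
noncomputable def transMat {n : ℕ} (r : ℕ) (ξ η : Fin n → ℝ) :
    Matrix (Fin n) (Fin n) ℝ :=
  Matrix.of fun i j =>
    if (i : ℕ) = (j : ℕ) then
      (if (i : ℕ) < 2 * r then
        extVec η (2 * ((i : ℕ) / 2) + 1) / extVec ξ (2 * ((i : ℕ) / 2) + 1)
      else η i / ξ i)
    else if (j : ℕ) = (i : ℕ) + 1 ∧ (i : ℕ) < 2 * r ∧ (i : ℕ) % 2 = 0 then
      η i / ξ j - ξ i * η j / ξ j ^ 2
    else 0

open Filter Topology

/-!
Both `T` and `B` lie in the commutative algebra of matrices `D + N` with the block shape of `B`: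
`D` is diagonal and constant on each `2 × 2` block, and `N` lives on the superdiagonals of these
blocks, so that `N N' = 0` and `D N = N D`. There `(D + N) ^ q = D ^ q + q D ^ (q - 1) N`. The
hypothesis `ξ_i η_i > 0` makes the diagonal of `T` positive, hence
`S_q = D ^ (1/q) + D ^ (1/q - 1) N / q` is a `q`-th root of `T = D + N`, and `S_q → I` since
`D ^ (1/q) → I` and `N / q → 0`.
-/

/-- The block of `pairJordan n r _` containing the index `k`: the pair `{2t, 2t+1}` is block `t`,
and an index `k ≥ 2 * r` is its own block `k`. -/
def pairIdx (r k : ℕ) : ℕ := if k < 2 * r then k / 2 else k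

lemma pairIdx_of_lt {r k : ℕ} (h : k < 2 * r) : pairIdx r k = k / 2 := if_pos h

lemma pairIdx_of_le {r k : ℕ} (h : 2 * r ≤ k) : pairIdx r k = k := if_neg (by omega)

def pairBlockMat (n r : ℕ) (d b : ℕ → ℝ) : Matrix (Fin n) (Fin n) ℝ :=
  Matrix.of fun i j =>
    if (i : ℕ) = (j : ℕ) then d (pairIdx r i)
    else if (j : ℕ) = (i : ℕ) + 1 ∧ (i : ℕ) < 2 * r ∧ (i : ℕ) % 2 = 0 then b ((i : ℕ) / 2)
    else 0

def pairSuperdiag (n r : ℕ) (b : ℕ → ℝ) : Matrix (Fin n) (Fin n) ℝ :=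
  Matrix.of fun i j =>
    if (j : ℕ) = (i : ℕ) + 1 ∧ (i : ℕ) < 2 * r ∧ (i : ℕ) % 2 = 0 then b ((i : ℕ) / 2) else 0

lemma sum_ite_val_eq_mul_extVec {n : ℕ} (v : Fin n → ℝ) (k : ℕ) (c : ℝ) :
    ∑ j : Fin n, (if (j : ℕ) = k then c else 0) * v j = c * extVec v k := by
  by_cases hk : k < n
  · rw [Finset.sum_eq_single ⟨k, hk⟩
      (fun j _ hj => by rw [if_neg (fun h => hj (Fin.ext h)), zero_mul]) (by simp), if_pos rfl,
      extVec, dif_pos hk]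
  · rw [Finset.sum_eq_zero (fun j _ => by rw [if_neg (by omega), zero_mul]), extVec, dif_neg hk,
      mul_zero]

lemma extVec_coe {n : ℕ} (v : Fin n → ℝ) (i : Fin n) : extVec v i = v i :=
  dif_pos i.isLt

lemma tendsto_rpow_inv_natCast {x : ℝ} (hx : 0 < x) :
    Tendsto (fun q : ℕ => x ^ (q : ℝ)⁻¹) atTop (𝓝 1) := by
  simpa [Function.comp_def] using ((Real.continuousAt_const_rpow hx.ne').tendsto).comp
    (tendsto_inv_atTop_nhds_zero_nat (𝕜 := ℝ))

section PairBlockMat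

variable (n r : ℕ)

lemma pairBlockMat_eq_diagonal_add (d b : ℕ → ℝ) :
    pairBlockMat n r d b = diagonal (fun i : Fin n => d (pairIdx r i)) + pairSuperdiag n r b := by
  ext i j
  by_cases h : i = j
  · subst h; simp [pairBlockMat, pairSuperdiag]
  · simp [pairBlockMat, pairSuperdiag, h, Fin.val_eq_val]

lemma pairSuperdiag_mul_pairSuperdiag (b b' : ℕ → ℝ) :
    pairSuperdiag n r b * pairSuperdiag n r b' = 0 := by
  ext i j
  rw [mul_apply]
  refine Finset.sum_eq_zero fun k _ => ?_
  simp only [pairSuperdiag, of_apply]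
  split_ifs <;> first | omega | simp

lemma diagonal_mul_pairSuperdiag (d b : ℕ → ℝ) :
    diagonal (fun i : Fin n => d (pairIdx r i)) * pairSuperdiag n r b =
      pairSuperdiag n r (d * b) := by
  ext i j
  simp only [diagonal_mul, pairSuperdiag, of_apply]
  split_ifs with h
  · rw [pairIdx_of_lt h.2.1]; rfl
  · exact mul_zero _

lemma pairSuperdiag_mul_diagonal (d b : ℕ → ℝ) :
    pairSuperdiag n r b * diagonal (fun i : Fin n => d (pairIdx r i)) =
      pairSuperdiag n r (b * d) := by
  ext i j
  simp only [mul_diagonal, pairSuperdiag, of_apply]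
  split_ifs with h
  · rw [pairIdx_of_lt (by omega), show (j : ℕ) / 2 = (i : ℕ) / 2 by omega]; rfl
  · exact zero_mul _

lemma pairSuperdiag_add (b b' : ℕ → ℝ) :
    pairSuperdiag n r b + pairSuperdiag n r b' = pairSuperdiag n r (b + b') := by
  ext i j
  simp only [pairSuperdiag, Matrix.add_apply, of_apply, Pi.add_apply]
  split_ifs <;> simp

lemma pairBlockMat_mul (d b d' b' : ℕ → ℝ) :
    pairBlockMat n r d b * pairBlockMat n r d' b' =
      pairBlockMat n r (d * d') (d * b' + b * d') := by
  simp only [pairBlockMat_eq_diagonal_add, add_mul, mul_add, diagonal_mul_diagonal,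
    diagonal_mul_pairSuperdiag, pairSuperdiag_mul_diagonal, pairSuperdiag_mul_pairSuperdiag,
    add_zero, add_assoc, pairSuperdiag_add, add_comm (b * d')]
  rfl

lemma pairBlockMat_one : pairBlockMat n r 1 0 = 1 := by
  rw [pairBlockMat_eq_diagonal_add]
  ext i j
  simp [pairSuperdiag, one_apply]

lemma pairBlockMat_commute (d b d' b' : ℕ → ℝ) :
    Commute (pairBlockMat n r d b) (pairBlockMat n r d' b') := by
  unfold Commute SemiconjBy
  rw [pairBlockMat_mul, pairBlockMat_mul, mul_comm d d', add_comm, mul_comm b', mul_comm b]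

lemma pairBlockMat_pow (d b : ℕ → ℝ) (q : ℕ) :
    pairBlockMat n r d b ^ q = pairBlockMat n r (d ^ q) (fun t => q * d t ^ (q - 1) * b t) := by
  induction q with
  | zero =>
    simp only [pow_zero, CharP.cast_eq_zero, zero_mul]
    exact (pairBlockMat_one n r).symm
  | succ q ih =>
    rw [pow_succ, ih, pairBlockMat_mul, pow_succ]
    congr 1
    ext t
    rcases q with _ | q
    · simp
    · simp only [Nat.add_sub_cancel, Pi.add_apply, Pi.mul_apply, Pi.pow_apply]; push_cast; ring

lemma pairBlockMat_mulVec (d b : ℕ → ℝ) (v : Fin n → ℝ) (i : Fin n) :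
    (pairBlockMat n r d b *ᵥ v) i = d (pairIdx r i) * v i +
      if (i : ℕ) < 2 * r ∧ (i : ℕ) % 2 = 0 then b (i / 2) * extVec v (i + 1) else 0 := by
  rw [pairBlockMat_eq_diagonal_add, add_mulVec, Pi.add_apply, mulVec_diagonal]
  congr 1
  simp only [mulVec, dotProduct, pairSuperdiag, of_apply]
  split_ifs with h
  · simp only [h, and_true]
    exact sum_ite_val_eq_mul_extVec v _ _
  · simp [h]

lemma tendsto_pairBlockMat {ι : Type*} {l : Filter ι} {d b : ι → ℕ → ℝ}
    {d₀ b₀ : ℕ → ℝ} (hd : ∀ k, Tendsto (fun q => d q k) l (𝓝 (d₀ k)))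
    (hb : ∀ t, Tendsto (fun q => b q t) l (𝓝 (b₀ t))) :
    Tendsto (fun q => pairBlockMat n r (d q) (b q)) l (𝓝 (pairBlockMat n r d₀ b₀)) := by
  refine tendsto_pi_nhds.2 fun i => tendsto_pi_nhds.2 fun j => ?_
  simp only [pairBlockMat, of_apply]
  split_ifs
  exacts [hd _, hb _, tendsto_const_nhds]

noncomputable def pairBlockRoot (d b : ℕ → ℝ) (q : ℕ) : Matrix (Fin n) (Fin n) ℝ :=
  pairBlockMat n r (fun k => d k ^ (q : ℝ)⁻¹) (fun t => b t / d t * d t ^ (q : ℝ)⁻¹ / q)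

lemma pairBlockRoot_pow {d : ℕ → ℝ} (hd : ∀ k, 0 < d k) (b : ℕ → ℝ) {q : ℕ}
    (hq : q ≠ 0) : pairBlockRoot n r d b q ^ q = pairBlockMat n r d b := by
  have hroot : ∀ k, (d k ^ (q : ℝ)⁻¹) ^ q = d k := fun k => Real.rpow_inv_natCast_pow (hd k).le hq
  rw [pairBlockRoot, pairBlockMat_pow]
  congr 1
  · ext k; exact hroot k
  · ext t
    obtain ⟨p, rfl⟩ := Nat.exists_eq_succ_of_ne_zero hq
    have hdt := (hd t).ne'
    have hroot_t := hroot t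
    rw [pow_succ] at hroot_t
    simp only [Nat.succ_sub_one]
    generalize d t ^ ((p.succ : ℕ) : ℝ)⁻¹ = x at hroot_t ⊢
    rw [← hroot_t] at hdt ⊢
    field_simp
    rw [mul_right_comm, mul_div_cancel_left₀ _ hdt]

lemma tendsto_pairBlockRoot {d : ℕ → ℝ} (hd : ∀ k, 0 < d k) (b : ℕ → ℝ) :
    Tendsto (pairBlockRoot n r d b) atTop (𝓝 1) := by
  rw [← pairBlockMat_one n r]
  refine tendsto_pairBlockMat n r (fun k => tendsto_rpow_inv_natCast (hd k)) fun t => ?_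
  exact (tendsto_const_nhds.mul (tendsto_rpow_inv_natCast (hd t))).div_atTop
    tendsto_natCast_atTop_atTop

end PairBlockMat

/-- The value `1` at the indices `r ≤ k < 2 * r` and `n ≤ k`, which label no block of
`pairJordan n r _`, only serves to make every entry positive. -/
noncomputable def transDiag {n : ℕ} (r : ℕ) (ξ η : Fin n → ℝ) (k : ℕ) : ℝ :=
  if k < r then extVec η (2 * k + 1) / extVec ξ (2 * k + 1)
  else if 2 * r ≤ k ∧ k < n then extVec η k / extVec ξ k else 1

noncomputable def transSuper {n : ℕ} (ξ η : Fin n → ℝ) (t : ℕ) : ℝ :=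
  extVec η (2 * t) / extVec ξ (2 * t + 1) -
    extVec ξ (2 * t) * extVec η (2 * t + 1) / extVec ξ (2 * t + 1) ^ 2

def jordanDiag (r : ℕ) (lam : ℕ → ℝ) (k : ℕ) : ℝ := if k < r then lam k else lam (k - r)

lemma transMat_eq_pairBlockMat {n : ℕ} (r : ℕ) (ξ η : Fin n → ℝ) :
    transMat r ξ η = pairBlockMat n r (transDiag r ξ η) (transSuper ξ η) := by
  ext i j
  simp only [transMat, pairBlockMat, of_apply]
  split_ifs with hij hi hsup
  · rw [pairIdx_of_lt hi, transDiag, if_pos (by omega)]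
  · rw [pairIdx_of_le (not_lt.1 hi), transDiag, if_neg (by omega), if_pos ⟨by omega, i.isLt⟩,
      extVec_coe, extVec_coe]
  · rw [transSuper, show 2 * ((i : ℕ) / 2) = i by omega, ← hsup.1, extVec_coe, extVec_coe,
      extVec_coe, extVec_coe]
  · rfl

lemma pairJordan_eq_pairBlockMat (n r : ℕ) (lam : ℕ → ℝ) :
    pairJordan n r lam = pairBlockMat n r (jordanDiag r lam) 1 := by
  ext i j
  simp only [pairJordan, pairBlockMat, of_apply]
  split_ifs with hij hi
  · rw [pairIdx_of_lt hi, jordanDiag, if_pos (by omega)]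
  · rw [pairIdx_of_le (not_lt.1 hi), jordanDiag, if_neg (by omega)]
  all_goals rfl

section Transition

variable {n r : ℕ} {ξ η : Fin n → ℝ}

lemma transDiag_pos (h2r : 2 * r ≤ n)
    (hξη : ∀ i : Fin n, (((i : ℕ) % 2 = 1 ∧ (i : ℕ) < 2 * r) ∨ 2 * r ≤ (i : ℕ)) →
      0 < ξ i * η i) (k : ℕ) : 0 < transDiag r ξ η k := by
  have hratio : ∀ k (hk : k < n), ((k % 2 = 1 ∧ k < 2 * r) ∨ 2 * r ≤ k) →
      0 < extVec η k / extVec ξ k := by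
    intro k hk hpiv
    have h := hξη ⟨k, hk⟩ hpiv
    rw [mul_pos_iff] at h
    rw [extVec, dif_pos hk, extVec, dif_pos hk, div_pos_iff]
    tauto
  unfold transDiag
  split_ifs with hk hk'
  · exact hratio _ (by omega) (Or.inl ⟨by omega, by omega⟩)
  · exact hratio _ hk'.2 (Or.inr hk'.1)
  · exact one_pos

lemma transMat_mulVec_self (h2r : 2 * r ≤ n)
    (hξ : ∀ i : Fin n, (((i : ℕ) % 2 = 1 ∧ (i : ℕ) < 2 * r) ∨ 2 * r ≤ (i : ℕ)) → ξ i ≠ 0) :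
    transMat r ξ η *ᵥ ξ = η := by
  have hx : ∀ k < n, ((k % 2 = 1 ∧ k < 2 * r) ∨ 2 * r ≤ k) → extVec ξ k ≠ 0 :=
    fun k hk hpiv => by rw [extVec, dif_pos hk]; exact hξ ⟨k, hk⟩ hpiv
  funext i
  rw [transMat_eq_pairBlockMat, pairBlockMat_mulVec, ← extVec_coe ξ i, ← extVec_coe η i]
  have hi := i.isLt
  generalize (i : ℕ) = k at *
  by_cases hk : k < 2 * r
  · rw [pairIdx_of_lt hk, transDiag, transSuper, if_pos (by omega : k / 2 < r)]
    rcases Nat.mod_two_eq_zero_or_one k with hk2 | hk2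
    · rw [if_pos ⟨hk, hk2⟩, show 2 * (k / 2) + 1 = k + 1 by omega, show 2 * (k / 2) = k by omega]
      have := hx (k + 1) (by omega) (Or.inl ⟨by omega, by omega⟩)
      field_simp
      ring
    · rw [if_neg (by omega), show 2 * (k / 2) + 1 = k by omega, add_zero]
      exact div_mul_cancel₀ _ (hx k hi (Or.inl ⟨hk2, hk⟩))
  · rw [pairIdx_of_le (by omega), transDiag, if_neg (by omega), if_pos ⟨by omega, hi⟩,
      if_neg (by omega), add_zero]
    exact div_mul_cancel₀ _ (hx k hi (Or.inr (by omega)))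

end Transition

theorem stmt8_general {m r n : ℕ} (hr : r ≤ m) (hn : n = m + r)
    (lam : ℕ → ℝ)
    (ξ η : Fin n → ℝ)
    (horth : ∀ i : Fin n, (((i : ℕ) % 2 = 1 ∧ (i : ℕ) < 2 * r) ∨ 2 * r ≤ (i : ℕ)) →
      0 < ξ i * η i) :
    (transMat r ξ η).mulVec ξ = η ∧
    transMat r ξ η * pairJordan n r lam = pairJordan n r lam * transMat r ξ η ∧
    ∃ S : ℕ → Matrix (Fin n) (Fin n) ℝ,
      (∀ q : ℕ, 1 ≤ q → S q ^ q = transMat r ξ η ∧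
        S q * pairJordan n r lam = pairJordan n r lam * S q) ∧
      Filter.Tendsto S Filter.atTop (nhds 1) := by
  have h2r : 2 * r ≤ n := by omega
  have hd := transDiag_pos h2r horth
  refine ⟨transMat_mulVec_self h2r fun i hi => left_ne_zero_of_mul (horth i hi).ne', ?_⟩
  rw [transMat_eq_pairBlockMat, pairJordan_eq_pairBlockMat]
  exact ⟨pairBlockMat_commute .., pairBlockRoot n r (transDiag r ξ η) (transSuper ξ η),
    fun q hq => ⟨pairBlockRoot_pow n r hd _ (by omega), pairBlockMat_commute ..⟩,
    tendsto_pairBlockRoot n r hd _⟩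

/-- the transition matrix `T` maps `ξ` to `η`, commutes with `B`, and admits
for every `q ≥ 1` a `q`-th root `S q` commuting with `B`, with `S q → I` as `q → ∞`. -/
theorem stmt8 {m r n : ℕ} (hr : r ≤ m) (hn : n = m + r)
    (lam : ℕ → ℝ) (hnz : ∀ i < m, lam i ≠ 0)
    (hdist : ∀ i < m, ∀ j < m, i ≠ j → lam i ≠ lam j)
    (ξ η : Fin n → ℝ)
    (horth : ∀ i : Fin n, (((i : ℕ) % 2 = 1 ∧ (i : ℕ) < 2 * r) ∨ 2 * r ≤ (i : ℕ)) →
      0 < ξ i * η i) :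
    (transMat r ξ η).mulVec ξ = η ∧
    transMat r ξ η * pairJordan n r lam = pairJordan n r lam * transMat r ξ η ∧
    ∃ S : ℕ → Matrix (Fin n) (Fin n) ℝ,
      (∀ q : ℕ, 1 ≤ q → S q ^ q = transMat r ξ η ∧
        S q * pairJordan n r lam = pairJordan n r lam * S q) ∧
      Filter.Tendsto S Filter.atTop (nhds 1) :=
  stmt8_general hr hn lam ξ η horth
end

section
/- Let n ≥ 3, let λ be a nonzero real number, and let B = J_n(λ) be the n×n Jordan block with λ on the diagonal and 1 on the superdiagonal. Let S ⊆ ℝⁿ be a set containing more than one state such that every state in S can be steered to every other state in S in the system x(k+1) = (I + u(k)B)x(k). Then every ξ ∈ S satisfies ξ_j = 0 for all j ≥ 3; that is, only the first two entries of any state in such a controllable region can be nonzero. -/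
open Matrix MeasureTheory Polynomial

/-! Write `J_n(λ) = λ + N` with `N` the nilpotent shift. A product of factors
`1 + cJ = (1 + cλ) + cN` expands as `q₀ + q₁N + q₂N² + ⋯`, and if the last nonzero entry of `ξ`
has index `m ≥ 2`, the entries `m, m - 1, m - 2` of the product applied to `ξ` only involve
`q₀, q₁, q₂`. A closed loop `ξ → η → ξ` therefore has `q₀ = 1` and `q₁ = q₂ = 0`. Since
`q₁² - 2q₀q₂ = ∑ᵢ cᵢ² ∏_{j ≠ i} (1 + cⱼλ)²`, all controls of the loop vanish, so `η = ξ`. -/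

noncomputable def ctrlProd {n : ℕ} (B : Matrix (Fin n) (Fin n) ℝ) (L : List ℝ) :
    Matrix (Fin n) (Fin n) ℝ :=
  (L.map fun c => 1 + c • B).prod

section ctrlProd

variable {n : ℕ} (B : Matrix (Fin n) (Fin n) ℝ)

lemma ctrlProd_cons (c : ℝ) (L : List ℝ) : ctrlProd B (c :: L) = (1 + c • B) * ctrlProd B L := by
  simp [ctrlProd]

lemma ctrlProd_append (L L' : List ℝ) : ctrlProd B (L ++ L') = ctrlProd B L * ctrlProd B L' := by
  simp [ctrlProd]

lemma ctrlProd_eq_one {L : List ℝ} (hL : ∀ c ∈ L, c = 0) : ctrlProd B L = 1 :=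
  List.prod_eq_one fun _ hx => by
    obtain ⟨c, hc, rfl⟩ := List.mem_map.mp hx
    simp [hL c hc]

lemma prodCtrl_eq_ctrlProd (l : ℕ) (u : ℕ → ℝ) :
    prodCtrl B l u = ctrlProd B ((List.range l).reverse.map u) := by
  simp [prodCtrl, ctrlProd, Function.comp_def]

lemma steers.exists_ctrlProd {ξ η : Fin n → ℝ} (h : steers B ξ η) :
    ∃ L, ctrlProd B L *ᵥ ξ = η := by
  obtain ⟨l, -, u, hu⟩ := h
  exact ⟨_, by rwa [← prodCtrl_eq_ctrlProd]⟩

end ctrlProd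

section jordanBlock

variable {n : ℕ} (lam : ℝ) (v : Fin n → ℝ)

lemma jordanBlock_mulVec_apply (i : Fin n) :
    (jordanBlock n lam *ᵥ v) i = lam * v i + ∑ j : Fin n, if (j : ℕ) = i + 1 then v j else 0 := by
  have h : ∀ j : Fin n, (if i = j then lam else if (j : ℕ) = i + 1 then 1 else 0) * v j
      = (if i = j then lam * v j else 0) + if (j : ℕ) = i + 1 then v j else 0 := by
    intro j
    by_cases hij : i = j
    · subst hij; simp
    · simp [hij]
  simp only [jordanBlock, mulVec, dotProduct, of_apply, h, Finset.sum_add_distrib,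
    Finset.sum_ite_eq, Finset.mem_univ, if_true]

lemma jordanBlock_mulVec_apply_of_val_eq_succ {i j : Fin n} (hij : (j : ℕ) = i + 1) :
    (jordanBlock n lam *ᵥ v) i = lam * v i + v j := by
  rw [jordanBlock_mulVec_apply, Finset.sum_eq_single j] <;> grind

lemma jordanBlock_mulVec_apply_of_forall_lt {i : Fin n} (hv : ∀ j : Fin n, (i : ℕ) < j → v j = 0) :
    (jordanBlock n lam *ᵥ v) i = lam * v i := by
  rw [jordanBlock_mulVec_apply, Finset.sum_eq_zero] <;> grind

end jordanBlock

/-- `prodCoeff₀ lam L`, `prodCoeff₁ lam L`, `prodCoeff₂ lam L` are the coefficients of `1`, `N`,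
`N²` in `∏_{c ∈ L} ((1 + cλ) + cN)`, where `N = J_n(0)` is the nilpotent part of `J_n(λ)`. -/
def prodCoeff₀ (lam : ℝ) : List ℝ → ℝ
  | [] => 1
  | c :: L => (1 + c * lam) * prodCoeff₀ lam L

def prodCoeff₁ (lam : ℝ) : List ℝ → ℝ
  | [] => 0
  | c :: L => (1 + c * lam) * prodCoeff₁ lam L + c * prodCoeff₀ lam L

def prodCoeff₂ (lam : ℝ) : List ℝ → ℝ
  | [] => 0
  | c :: L => (1 + c * lam) * prodCoeff₂ lam L + c * prodCoeff₁ lam L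

section prodCoeff

variable (lam : ℝ)

/-- `= ∑ᵢ cᵢ² ∏_{j ≠ i} (1 + cⱼλ)²`, a sum of squares. -/
def prodCoeffDisc (L : List ℝ) : ℝ :=
  prodCoeff₁ lam L ^ 2 - 2 * prodCoeff₀ lam L * prodCoeff₂ lam L

lemma prodCoeffDisc_nil : prodCoeffDisc lam [] = 0 := by
  simp [prodCoeffDisc, prodCoeff₀, prodCoeff₁, prodCoeff₂]

lemma prodCoeffDisc_cons (c : ℝ) (L : List ℝ) :
    prodCoeffDisc lam (c :: L) =
      (1 + c * lam) ^ 2 * prodCoeffDisc lam L + c ^ 2 * prodCoeff₀ lam L ^ 2 := by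
  simp only [prodCoeffDisc, prodCoeff₀, prodCoeff₁, prodCoeff₂]
  ring

lemma prodCoeffDisc_nonneg : ∀ L : List ℝ, 0 ≤ prodCoeffDisc lam L
  | [] => (prodCoeffDisc_nil lam).ge
  | c :: L => by
    rw [prodCoeffDisc_cons]
    have := prodCoeffDisc_nonneg L
    positivity

lemma forall_eq_zero_of_prodCoeffDisc_eq_zero :
    ∀ L : List ℝ, prodCoeff₀ lam L ≠ 0 → prodCoeffDisc lam L = 0 → ∀ c ∈ L, c = 0
  | [], _, _ => by simp
  | c :: L, h0, hD => by
    rw [prodCoeff₀] at h0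
    have h0L := right_ne_zero_of_mul h0
    rw [prodCoeffDisc_cons] at hD
    have hDL := prodCoeffDisc_nonneg lam L
    have hc : c ^ 2 * prodCoeff₀ lam L ^ 2 = 0 := by
      apply le_antisymm _ (by positivity)
      nlinarith [sq_nonneg (1 + c * lam)]
    obtain rfl : c = 0 := by simpa [h0L] using hc
    have hDL : prodCoeffDisc lam L = 0 := by simpa using hD
    simpa using forall_eq_zero_of_prodCoeffDisc_eq_zero L h0L hDL

end prodCoeff

lemma one_add_smul_mulVec_apply {n : ℕ} (B : Matrix (Fin n) (Fin n) ℝ) (c : ℝ) (w : Fin n → ℝ)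
    (i : Fin n) : ((1 + c • B) *ᵥ w) i = w i + c * (B *ᵥ w) i := by
  simp [add_mulVec, smul_mulVec]

section ctrlProdJordanBlock

variable {n : ℕ} (lam : ℝ) {v : Fin n → ℝ} {m : Fin n}

lemma ctrlProd_jordanBlock_mulVec_apply_eq_zero_of_lt (hv : ∀ i : Fin n, (m : ℕ) < i → v i = 0)
    (L : List ℝ) {i : Fin n} (hi : (m : ℕ) < i) :
    (ctrlProd (jordanBlock n lam) L *ᵥ v) i = 0 := by
  induction L generalizing i with
  | nil => simpa [ctrlProd] using hv i hi
  | cons c L ih =>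
    rw [ctrlProd_cons, ← mulVec_mulVec, one_add_smul_mulVec_apply,
      jordanBlock_mulVec_apply_of_forall_lt _ _ fun j hj => ih (hi.trans hj), ih hi]
    ring

lemma ctrlProd_jordanBlock_mulVec_apply_last (hv : ∀ i : Fin n, (m : ℕ) < i → v i = 0)
    (L : List ℝ) :
    (ctrlProd (jordanBlock n lam) L *ᵥ v) m = prodCoeff₀ lam L * v m := by
  induction L with
  | nil => simp [ctrlProd, prodCoeff₀]
  | cons c L ih =>
    rw [ctrlProd_cons, ← mulVec_mulVec, one_add_smul_mulVec_apply,
      jordanBlock_mulVec_apply_of_forall_lt _ _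
        fun j hj => ctrlProd_jordanBlock_mulVec_apply_eq_zero_of_lt lam hv L hj, ih, prodCoeff₀]
    ring

lemma ctrlProd_jordanBlock_mulVec_apply_of_succ_eq (hv : ∀ i : Fin n, (m : ℕ) < i → v i = 0)
    {m₁ : Fin n} (h₁ : (m₁ : ℕ) + 1 = m) (L : List ℝ) :
    (ctrlProd (jordanBlock n lam) L *ᵥ v) m₁ =
      prodCoeff₀ lam L * v m₁ + prodCoeff₁ lam L * v m := by
  induction L with
  | nil => simp [ctrlProd, prodCoeff₀, prodCoeff₁]
  | cons c L ih =>
    rw [ctrlProd_cons, ← mulVec_mulVec, one_add_smul_mulVec_apply,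
      jordanBlock_mulVec_apply_of_val_eq_succ _ _ h₁.symm, ih,
      ctrlProd_jordanBlock_mulVec_apply_last lam hv, prodCoeff₀, prodCoeff₁]
    ring

lemma ctrlProd_jordanBlock_mulVec_apply_of_succ_succ_eq (hv : ∀ i : Fin n, (m : ℕ) < i → v i = 0)
    {m₁ m₂ : Fin n} (h₁ : (m₁ : ℕ) + 1 = m) (h₂ : (m₂ : ℕ) + 1 = m₁) (L : List ℝ) :
    (ctrlProd (jordanBlock n lam) L *ᵥ v) m₂ =
      prodCoeff₀ lam L * v m₂ + prodCoeff₁ lam L * v m₁ + prodCoeff₂ lam L * v m := by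
  induction L with
  | nil => simp [ctrlProd, prodCoeff₀, prodCoeff₁, prodCoeff₂]
  | cons c L ih =>
    rw [ctrlProd_cons, ← mulVec_mulVec, one_add_smul_mulVec_apply,
      jordanBlock_mulVec_apply_of_val_eq_succ _ _ h₂.symm, ih,
      ctrlProd_jordanBlock_mulVec_apply_of_succ_eq lam hv h₁, prodCoeff₀, prodCoeff₁, prodCoeff₂]
    ring

lemma forall_eq_zero_of_ctrlProd_jordanBlock_mulVec_eq_self
    (hv : ∀ i : Fin n, (m : ℕ) < i → v i = 0) (hvm : v m ≠ 0) (hm : 2 ≤ (m : ℕ)) {L : List ℝ}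
    (hL : ctrlProd (jordanBlock n lam) L *ᵥ v = v) :
    ∀ c ∈ L, c = 0 := by
  have h₁ : ((⟨m - 1, by omega⟩ : Fin n) : ℕ) + 1 = m := by simp only; omega
  have h₂ : ((⟨m - 2, by omega⟩ : Fin n) : ℕ) + 1 = m - 1 := by simp only; omega
  have e₀ := ctrlProd_jordanBlock_mulVec_apply_last lam hv L
  have e₁ := ctrlProd_jordanBlock_mulVec_apply_of_succ_eq lam hv h₁ L
  have e₂ := ctrlProd_jordanBlock_mulVec_apply_of_succ_succ_eq lam hv h₁ h₂ L
  rw [hL] at e₀ e₁ e₂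
  have q₀ : prodCoeff₀ lam L = 1 := (mul_eq_right₀ hvm).mp e₀.symm
  have q₁ : prodCoeff₁ lam L = 0 := by simpa [q₀, hvm] using e₁
  have q₂ : prodCoeff₂ lam L = 0 := by simpa [q₀, q₁, hvm] using e₂
  exact forall_eq_zero_of_prodCoeffDisc_eq_zero lam L (by simp [q₀])
    (by simp [prodCoeffDisc, q₁, q₂])

end ctrlProdJordanBlock

lemma exists_last_ne_zero {n : ℕ} {M : Type*} [Zero M] {v : Fin n → M} {j : Fin n}
    (hj : v j ≠ 0) :
    ∃ m : Fin n, j ≤ m ∧ v m ≠ 0 ∧ ∀ i : Fin n, (m : ℕ) < i → v i = 0 := by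
  classical
  obtain ⟨m, hm, hmax⟩ := (Finset.univ.filter fun i => v i ≠ 0).exists_max_image id ⟨j, by simpa⟩
  refine ⟨m, hmax j (by simpa), (Finset.mem_filter.mp hm).2, fun i hi => ?_⟩
  by_contra hvi
  exact (hmax i (by simpa)).not_gt hi

theorem stmt9_general {n : ℕ} (lam : ℝ)
    (S : Set (Fin n → ℝ)) (hS : S.Nontrivial)
    (hctrl : ∀ ξ ∈ S, ∀ η ∈ S, steers (jordanBlock n lam) ξ η) :
    ∀ ξ ∈ S, ∀ j : Fin n, 2 ≤ (j : ℕ) → ξ j = 0 := by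
  intro ξ hξ j hj
  by_contra hξj
  obtain ⟨m, hjm, hξm, hv⟩ := exists_last_ne_zero hξj
  refine hS.not_subset_singleton (x := ξ) fun η hη => ?_
  obtain ⟨L, rfl⟩ := (hctrl ξ hξ η hη).exists_ctrlProd
  obtain ⟨L', hL'⟩ := (hctrl _ hη ξ hξ).exists_ctrlProd
  have hloop : ctrlProd (jordanBlock n lam) (L' ++ L) *ᵥ ξ = ξ := by
    rw [ctrlProd_append, ← mulVec_mulVec, hL']
  have hL := forall_eq_zero_of_ctrlProd_jordanBlock_mulVec_eq_self lam hv hξm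
    (hj.trans (Fin.le_def.mp hjm)) hloop
  rw [ctrlProd_eq_one _ fun c hc => hL c (List.mem_append_right _ hc), one_mulVec]
  rfl

/-- for the Jordan block `B = J_n(λ)` with `n ≥ 3` and `λ ≠ 0`, any
controllable region containing more than one state consists of states whose entries
beyond the second all vanish (0-based: `ξ j = 0` for `j ≥ 2`). -/
theorem stmt9 {n : ℕ} (hn : 3 ≤ n) (lam : ℝ) (hlam : lam ≠ 0)
    (S : Set (Fin n → ℝ)) (hS : S.Nontrivial)
    (hctrl : ∀ ξ ∈ S, ∀ η ∈ S, steers (jordanBlock n lam) ξ η) :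
    ∀ ξ ∈ S, ∀ j : Fin n, 2 ≤ (j : ℕ) → ξ j = 0 :=
  stmt9_general lam S hS hctrl
end

section
/- Let n ≥ 1, let λ ∈ ℝ, and let J = J_n(λ) be the n×n Jordan block with λ on the diagonal and 1 on the superdiagonal. Let u(0), …, u(L) be real numbers and set M = (I + u(L)J)(I + u(L−1)J)⋯(I + u(0)J). If there exists ξ ∈ ℝⁿ with Mξ = ξ and ξ_n ≠ 0 (the last entry of ξ is nonzero), then M = I. -/
open Matrix MeasureTheory Polynomial

/-- Upper-triangular Toeplitz matrix with coefficients `c`. -/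
noncomputable def Tmat {n : ℕ} (c : ℕ → ℝ) : Matrix (Fin n) (Fin n) ℝ :=
  Matrix.of fun i j => if (i : ℕ) ≤ (j : ℕ) then c ((j : ℕ) - (i : ℕ)) else 0

lemma jb_split (n : ℕ) (lam : ℝ) :
    jordanBlock n lam = lam • (1 : Matrix (Fin n) (Fin n) ℝ) + jordanBlock n 0 := by
  ext i j
  simp [jordanBlock, Matrix.one_apply]
  split_ifs <;> simp

lemma Nmul {n : ℕ} (c : ℕ → ℝ) :
    jordanBlock n 0 * Tmat c = Tmat (fun d => if d = 0 then 0 else c (d - 1)) := by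
  ext i j
  rw [Matrix.mul_apply]
  simp only [jordanBlock, Tmat, Matrix.of_apply]
  have hterm : ∀ k : Fin n,
      (if i = k then (0:ℝ) else if (k : ℕ) = (i : ℕ) + 1 then 1 else 0) *
        (if (k : ℕ) ≤ (j : ℕ) then c ((j : ℕ) - (k : ℕ)) else 0)
      = (if (k : ℕ) = (i : ℕ) + 1 then
          (if (k : ℕ) ≤ (j : ℕ) then c ((j : ℕ) - (k : ℕ)) else 0) else 0) := by
    intro k
    by_cases h1 : i = k
    · subst h1; simp
    · simp [h1]
      split_ifs <;> simp
  rw [Finset.sum_congr rfl fun k _ => hterm k]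
  by_cases h : (i : ℕ) + 1 < n
  · have : ∀ k : Fin n, ((k : ℕ) = (i : ℕ) + 1) ↔ k = ⟨(i : ℕ) + 1, h⟩ := by
      intro k; constructor
      · intro hk; exact Fin.ext hk
      · intro hk; subst hk; rfl
    simp only [this]
    rw [Finset.sum_ite_eq' Finset.univ]
    simp only [Finset.mem_univ, if_true]
    split_ifs <;> first | (congr 1; omega) | omega | rfl
  · have hz : ∀ k : Fin n, (if (k : ℕ) = (i : ℕ) + 1 then
        (if (k : ℕ) ≤ (j : ℕ) then c ((j : ℕ) - (k : ℕ)) else 0) else 0) = 0 := by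
      intro k
      have : (k : ℕ) < n := k.isLt
      rw [if_neg (by omega)]
    rw [Finset.sum_congr rfl fun k _ => hz k, Finset.sum_const_zero]
    have hj : (j : ℕ) < n := j.isLt
    have hi : (i : ℕ) < n := i.isLt
    split_ifs with h1 h2 <;> first | rfl | omega

lemma factor_mul {n : ℕ} (c : ℕ → ℝ) (v lam : ℝ) :
    ((1 : Matrix (Fin n) (Fin n) ℝ) + v • jordanBlock n lam) * Tmat c
      = Tmat (fun d => (1 + v * lam) * c d + v * (if d = 0 then 0 else c (d - 1))) := by
  have h1 : ((1 : Matrix (Fin n) (Fin n) ℝ) + v • jordanBlock n lam) * Tmat c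
      = Tmat c + (v * lam) • Tmat c + v • (jordanBlock n 0 * Tmat c) := by
    rw [jb_split n lam]
    rw [Matrix.add_mul, Matrix.one_mul, Matrix.smul_mul, Matrix.add_mul, Matrix.smul_mul,
      Matrix.one_mul, smul_add, smul_smul, add_assoc]
  rw [h1, Nmul]
  ext i j
  simp [Tmat]
  split_ifs <;> ring


lemma prodCtrl_succ {n : ℕ} (B : Matrix (Fin n) (Fin n) ℝ) (l : ℕ) (u : ℕ → ℝ) :
    prodCtrl B (l + 1) u = ((1 : Matrix (Fin n) (Fin n) ℝ) + u l • B) * prodCtrl B l u := by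
  simp [prodCtrl, List.range_succ]

lemma prodCtrl_toeplitz {n : ℕ} (lam : ℝ) (u : ℕ → ℝ) (l : ℕ) :
    ∃ c : ℕ → ℝ, prodCtrl (jordanBlock n lam) l u = Tmat c := by
  induction l with
  | zero =>
    refine ⟨fun d => if d = 0 then 1 else 0, ?_⟩
    ext i j
    simp [prodCtrl, Tmat, Matrix.one_apply, Fin.ext_iff]
    split_ifs <;> first | rfl | omega
  | succ l ih =>
    obtain ⟨c, hc⟩ := ih
    exact ⟨_, by rw [prodCtrl_succ, hc, factor_mul]⟩


/-- if a product `M = (I + u(L)J)⋯(I + u(0)J)` of factors built on a Jordan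
block `J = J_n(λ)` fixes a vector whose last entry is nonzero, then `M = I`. -/
theorem stmt10 {n : ℕ} (hn : 1 ≤ n) (lam : ℝ) (L : ℕ) (u : ℕ → ℝ)
    (ξ : Fin n → ℝ)
    (hfix : (prodCtrl (jordanBlock n lam) (L + 1) u).mulVec ξ = ξ)
    (hlast : ξ ⟨n - 1, by omega⟩ ≠ 0) :
    prodCtrl (jordanBlock n lam) (L + 1) u = 1 := by
  obtain ⟨c, hc⟩ := prodCtrl_toeplitz (n := n) lam u (L + 1)
  rw [hc] at hfix ⊢
  set last : Fin n := ⟨n - 1, by omega⟩ with hlastdef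
  have hlv : (last : ℕ) = n - 1 := rfl
  have hrow : ∀ i : Fin n, (∑ j : Fin n, Tmat c i j * ξ j) = ξ i := by
    intro i
    have := congrFun hfix i
    simpa [Matrix.mulVec, dotProduct] using this
  have key : ∀ d, d < n → c d = if d = 0 then 1 else 0 := by
    intro d
    induction d using Nat.strong_induction_on with
    | _ d IH =>
    intro hd
    by_cases hd0 : d = 0
    · subst hd0
      have hterm : ∀ j : Fin n, Tmat c last j * ξ j
          = if j = last then c 0 * ξ last else 0 := by
        intro j
        by_cases hji : j = last
        · subst hji
          simp only [Tmat, Matrix.of_apply]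
          rw [if_pos (le_refl _), Nat.sub_self]
          simp
        · have hv : (j : ℕ) ≠ (last : ℕ) := fun h => hji (Fin.ext h)
          have hjn := j.isLt
          have : ¬ ((last : ℕ) ≤ (j : ℕ)) := by omega
          simp only [Tmat, Matrix.of_apply]
          rw [if_neg this, zero_mul, if_neg hji]
      have h0 := hrow last
      rw [Finset.sum_congr rfl fun j _ => hterm j, Finset.sum_ite_eq' Finset.univ] at h0
      simp only [Finset.mem_univ, if_true] at h0
      have : c 0 = 1 := mul_right_cancel₀ hlast (by rw [one_mul]; exact h0)
      simpa using this
    · have hc0 : c 0 = 1 := by simpa using IH 0 (by omega) (by omega)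
      set i : Fin n := ⟨n - 1 - d, by omega⟩ with hidef
      have hiv : (i : ℕ) = n - 1 - d := rfl
      have hine : i ≠ last := by
        intro h
        have := congrArg Fin.val h
        rw [hiv, hlv] at this
        omega
      have hterm : ∀ j : Fin n, Tmat c i j * ξ j
          = (if j = i then ξ i else 0) + (if j = last then c d * ξ last else 0) := by
        intro j
        by_cases hji : j = i
        · subst hji
          simp only [Tmat, Matrix.of_apply]
          rw [if_pos (le_refl _), Nat.sub_self, hc0, one_mul, if_neg hine]
          simp
        · by_cases hjl : j = last
          · subst hjl
            have h1 : (i : ℕ) ≤ (last : ℕ) := by rw [hiv, hlv]; omega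
            have h2 : (last : ℕ) - (i : ℕ) = d := by rw [hiv, hlv]; omega
            simp only [Tmat, Matrix.of_apply]
            rw [if_pos h1, h2, if_neg (Ne.symm hine)]
            simp
          · have hv1 : (j : ℕ) ≠ (i : ℕ) := fun h => hji (Fin.ext h)
            have hv2 : (j : ℕ) ≠ (last : ℕ) := fun h => hjl (Fin.ext h)
            have hjn := j.isLt
            rw [if_neg hji, if_neg hjl, add_zero]
            simp only [Tmat, Matrix.of_apply]
            by_cases hle : (i : ℕ) ≤ (j : ℕ)
            · rw [if_pos hle]
              have hd' : (j : ℕ) - (i : ℕ) < d := by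
                rw [hiv] at hle ⊢; rw [hlv] at hv2; omega
              have hne0 : (j : ℕ) - (i : ℕ) ≠ 0 := by
                rw [hiv] at hle hv1 ⊢; omega
              have hz := IH _ hd' (by omega)
              rw [if_neg hne0] at hz
              rw [hz, zero_mul]
            · rw [if_neg hle, zero_mul]
      have h0 := hrow i
      rw [Finset.sum_congr rfl fun j _ => hterm j, Finset.sum_add_distrib,
        Finset.sum_ite_eq' Finset.univ, Finset.sum_ite_eq' Finset.univ] at h0
      simp only [Finset.mem_univ, if_true] at h0
      have hz : c d * ξ last = 0 := by linarith
      have hcd : c d = 0 := by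
        rcases mul_eq_zero.mp hz with h | h
        · exact h
        · exact absurd h hlast
      simp [hd0, hcd]
  ext i j
  simp only [Tmat, Matrix.of_apply, Matrix.one_apply, Fin.ext_iff]
  by_cases hle : (i : ℕ) ≤ (j : ℕ)
  · rw [if_pos hle]
    have := key ((j : ℕ) - (i : ℕ)) (by omega)
    rw [this]
    split_ifs <;> first | rfl | omega
  · rw [if_neg hle, if_neg (by omega)]
end

section
/- Let B ∈ ℝ^{n×n} be block diagonal, consisting of Jordan blocks, and suppose that two of these Jordan blocks have the same eigenvalue λ; let i and j (i < j) be the indices of the last rows of these two blocks. Then for every finite control sequence u(0), …, u(l−1), setting η = (I + u(l−1)B)⋯(I + u(0)B)ξ, one has η_i = c ξ_i and η_j = c ξ_j where c = ∏_{k=0}^{l−1}(1 + u(k)λ); in particular ξ_i η_j = ξ_j η_i for every state η reachable from ξ, and consequently the system x(k+1) = (I + u(k)B)x(k) is not nearly controllable. -/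
open Matrix MeasureTheory Polynomial

/-- `B` is block diagonal consisting of Jordan blocks (encoded by a diagonal
`d` and a Boolean superdiagonal pattern `s` which is constant-eigenvalue within blocks),
two of its blocks share the eigenvalue `lam`, and `i < j` are the last rows of these two
blocks.  Then along any trajectory the coordinates `i` and `j` are both scaled by
`∏ (1 + u k · lam)`, hence `ξ_i η_j = ξ_j η_i` for every reachable `η`, and the system is
not nearly controllable. -/
theorem stmt13 {n : ℕ} (B : Matrix (Fin n) (Fin n) ℝ)
    (d : Fin n → ℝ) (s : Fin n → Bool)
    (hB : ∀ k l : Fin n, B k l =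
      if k = l then d k else if (l : ℕ) = (k : ℕ) + 1 ∧ s k = true then 1 else 0)
    (hJordan : ∀ k l : Fin n, (l : ℕ) = (k : ℕ) + 1 → s k = true → d l = d k)
    (lam : ℝ) (i j : Fin n) (hij : i < j)
    (hsi : s i = false) (hsj : s j = false)
    (hdi : d i = lam) (hdj : d j = lam) :
    (∀ (l : ℕ) (u : ℕ → ℝ) (ξ : Fin n → ℝ),
      (prodCtrl B l u).mulVec ξ i = (∏ k ∈ Finset.range l, (1 + u k * lam)) * ξ i ∧
      (prodCtrl B l u).mulVec ξ j = (∏ k ∈ Finset.range l, (1 + u k * lam)) * ξ j) ∧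
    (∀ ξ η : Fin n → ℝ, steers B ξ η → ξ i * η j = ξ j * η i) ∧
    ¬ nearlyControllable B := by

  -- Row `p` of `B` acts as scaling by `lam` when `s p = false` and `d p = lam`.
  have hrow : ∀ (p : Fin n), s p = false → d p = lam → ∀ x : Fin n → ℝ,
      B.mulVec x p = lam * x p := by
    intro p hp hdp x
    unfold Matrix.mulVec dotProduct
    rw [Finset.sum_eq_single p]
    · simp only [hB]; simp [hdp]
    · intro b _ hb
      simp only [hB]
      simp [Ne.symm hb, hp]
    · simp
  have key : ∀ (p : Fin n), s p = false → d p = lam → ∀ (l : ℕ) (u : ℕ → ℝ) (ξ : Fin n → ℝ),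
      (prodCtrl B l u).mulVec ξ p = (∏ k ∈ Finset.range l, (1 + u k * lam)) * ξ p := by
    intro p hp hdp l u ξ
    induction l with
    | zero => simp [prodCtrl, Matrix.one_mulVec]
    | succ m ih =>
      have hstep : prodCtrl B (m + 1) u =
          ((1 : Matrix (Fin n) (Fin n) ℝ) + u m • B) * prodCtrl B m u := by
        simp [prodCtrl, List.range_succ]
      rw [hstep, ← Matrix.mulVec_mulVec, Matrix.add_mulVec, Matrix.one_mulVec,
        Matrix.smul_mulVec]
      have := hrow p hp hdp ((prodCtrl B m u).mulVec ξ)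
      simp only [Pi.add_apply, Pi.smul_apply, smul_eq_mul, this, ih,
        Finset.prod_range_succ]
      ring
  have part1 : ∀ (l : ℕ) (u : ℕ → ℝ) (ξ : Fin n → ℝ),
      (prodCtrl B l u).mulVec ξ i = (∏ k ∈ Finset.range l, (1 + u k * lam)) * ξ i ∧
      (prodCtrl B l u).mulVec ξ j = (∏ k ∈ Finset.range l, (1 + u k * lam)) * ξ j := by
    intro l u ξ
    exact ⟨key i hsi hdi l u ξ, key j hsj hdj l u ξ⟩
  have part2 : ∀ ξ η : Fin n → ℝ, steers B ξ η → ξ i * η j = ξ j * η i := by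
    rintro ξ η ⟨l, -, u, rfl⟩
    rw [key i hsi hdi l u ξ, key j hsj hdj l u ξ]
    ring
  refine ⟨part1, part2, ?_⟩
  rintro ⟨E, F, hE, hF, hEF⟩
  have hne : i ≠ j := ne_of_lt hij
  -- pick ξ ∉ E with ξ i ≠ 0
  set S1 : Submodule ℝ (Fin n → ℝ) := LinearMap.ker (LinearMap.proj i : (Fin n → ℝ) →ₗ[ℝ] ℝ)
  have hS1 : S1 ≠ ⊤ := by
    intro h
    have : Pi.single i (1 : ℝ) ∈ S1 := h ▸ Submodule.mem_top
    simp [S1, LinearMap.mem_ker] at this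
  have hS1vol : volume (S1 : Set (Fin n → ℝ)) = 0 :=
    Measure.addHaar_submodule volume S1 hS1
  have hξ : ∃ ξ : Fin n → ℝ, ξ ∉ E ∪ (S1 : Set (Fin n → ℝ)) := by
    by_contra h
    push_neg at h
    have huniv : (Set.univ : Set (Fin n → ℝ)) ⊆ E ∪ (S1 : Set (Fin n → ℝ)) := fun x _ => h x
    have : volume (Set.univ : Set (Fin n → ℝ)) = 0 :=
      le_antisymm ((measure_mono huniv).trans (by
        calc volume (E ∪ (S1 : Set (Fin n → ℝ))) ≤ volume E + volume (S1 : Set (Fin n → ℝ)) :=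
          measure_union_le _ _
        _ = 0 := by rw [hE, hS1vol, add_zero])) bot_le
    exact (IsOpen.measure_ne_zero volume isOpen_univ Set.univ_nonempty) this
  obtain ⟨ξ, hξE⟩ := hξ
  have hξE' : ξ ∉ E := fun h => hξE (Or.inl h)
  have hξi : ξ i ≠ 0 := by
    intro h
    exact hξE (Or.inr (by simp [S1, LinearMap.mem_ker, h]))
  -- pick η ∉ F with ξ i * η j ≠ ξ j * η i
  set f : (Fin n → ℝ) →ₗ[ℝ] ℝ :=
    ξ i • (LinearMap.proj j) - ξ j • (LinearMap.proj i)
  set S2 : Submodule ℝ (Fin n → ℝ) := LinearMap.ker f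
  have hS2 : S2 ≠ ⊤ := by
    intro h
    have : Pi.single j (1 : ℝ) ∈ S2 := h ▸ Submodule.mem_top
    simp [S2, f, LinearMap.mem_ker, Pi.single_apply, hne, Ne.symm hne, hξi] at this
  have hS2vol : volume (S2 : Set (Fin n → ℝ)) = 0 :=
    Measure.addHaar_submodule volume S2 hS2
  have hη : ∃ η : Fin n → ℝ, η ∉ F ∪ (S2 : Set (Fin n → ℝ)) := by
    by_contra h
    push_neg at h
    have huniv : (Set.univ : Set (Fin n → ℝ)) ⊆ F ∪ (S2 : Set (Fin n → ℝ)) := fun x _ => h x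
    have : volume (Set.univ : Set (Fin n → ℝ)) = 0 :=
      le_antisymm ((measure_mono huniv).trans (by
        calc volume (F ∪ (S2 : Set (Fin n → ℝ))) ≤ volume F + volume (S2 : Set (Fin n → ℝ)) :=
          measure_union_le _ _
        _ = 0 := by rw [hF, hS2vol, add_zero])) bot_le
    exact (IsOpen.measure_ne_zero volume isOpen_univ Set.univ_nonempty) this
  obtain ⟨η, hηF⟩ := hη
  have hηF' : η ∉ F := fun h => hηF (Or.inl h)
  have hηne : ξ i * η j - ξ j * η i ≠ 0 := by
    intro h
    exact hηF (Or.inr (by simp [S2, f, LinearMap.mem_ker, sub_eq_zero] at h ⊢; linarith))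
  have := part2 ξ η (hEF ξ hξE' η hηF')
  exact hηne (by linarith)
end
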